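/- arXiv:2211.15141 — 7 statements merged into one kernel-verified Lean document; each statement's English description precedes it below -/
import Mathlib

section
/- Let v : Ω → ℂ be a holomorphic function on an open set Ω ⊆ ℂ and let n ≥ 1. Then the Wronskian determinant of the n+1 functions (1, v/1!, v²/2!, …, vⁿ/n!) equals (v')^{n(n+1)/2}. -/
open Finset

section WronskianAux

lemma itd_analytic {s : Set ℂ} {f : ℂ → ℂ} (hf : AnalyticOnNhd ℂ f s) (m : ℕ) :
    AnalyticOnNhd ℂ (iteratedDeriv m f) s := by
  rw [iteratedDeriv_eq_iterate]; exact hf.iterated_deriv m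

lemma itd_const_mul {s : Set ℂ} (hs : IsOpen s) {h : ℂ → ℂ} (hh : AnalyticOnNhd ℂ h s)
    (c : ℂ) (m : ℕ) :
    ∀ x ∈ s, iteratedDeriv m (fun w => c * h w) x = c * iteratedDeriv m h x := by
  induction m with
  | zero => intro x hx; simp
  | succ m IH =>
    intro x hx
    rw [iteratedDeriv_succ, iteratedDeriv_succ]
    have h1 : deriv (iteratedDeriv m fun w => c * h w) x
        = deriv (fun y => c * iteratedDeriv m h y) x := by
      apply Filter.EventuallyEq.deriv_eq
      filter_upwards [hs.mem_nhds hx] with y hy using IH y hy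
    rw [h1, deriv_const_mul c ((itd_analytic hh m x hx).differentiableAt)]

lemma itd_sum {s : Set ℂ} (hs : IsOpen s) {ι : Type*} (t : Finset ι) (h : ι → ℂ → ℂ)
    (hh : ∀ k ∈ t, AnalyticOnNhd ℂ (h k) s) (m : ℕ) :
    ∀ x ∈ s, iteratedDeriv m (fun w => ∑ k ∈ t, h k w) x
      = ∑ k ∈ t, iteratedDeriv m (h k) x := by
  induction m with
  | zero => intro x hx; simp
  | succ m IH =>
    intro x hx
    rw [iteratedDeriv_succ]
    have h1 : deriv (iteratedDeriv m fun w => ∑ k ∈ t, h k w) x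
        = deriv (fun y => ∑ k ∈ t, iteratedDeriv m (h k) y) x := by
      apply Filter.EventuallyEq.deriv_eq
      filter_upwards [hs.mem_nhds hx] with y hy using IH y hy
    rw [h1, deriv_fun_sum (fun k hk => (itd_analytic (hh k hk) m x hx).differentiableAt)]
    simp [iteratedDeriv_succ]

lemma pascal_sum (a b : ℕ → ℂ) (m : ℕ) :
    ∑ k ∈ range (m + 1), (m.choose k : ℂ) *
        (a (m - k + 1) * b k + a (m - k) * b (k + 1))
      = ∑ k ∈ range (m + 2), ((m + 1).choose k : ℂ) * (a (m + 1 - k) * b k) := by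
  have hL : ∑ k ∈ range (m + 1), (m.choose k : ℂ) *
        (a (m - k + 1) * b k + a (m - k) * b (k + 1))
      = (∑ k ∈ range (m + 1), (m.choose k : ℂ) * (a (m - k + 1) * b k))
        + ∑ k ∈ range (m + 1), (m.choose k : ℂ) * (a (m - k) * b (k + 1)) := by
    rw [← Finset.sum_add_distrib]; exact Finset.sum_congr rfl fun k _ => by ring
  rw [hL]
  have h1 : ∑ k ∈ range (m + 1), (m.choose k : ℂ) * (a (m - k + 1) * b k)
      = (∑ k ∈ range m, (m.choose (k + 1) : ℂ) * (a (m - k) * b (k + 1)))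
        + a (m + 1) * b 0 := by
    rw [Finset.sum_range_succ' (fun k => (m.choose k : ℂ) * (a (m - k + 1) * b k)) m]
    congr 1
    · apply Finset.sum_congr rfl
      intro k hk
      rw [mem_range] at hk
      have hmk : m - (k + 1) + 1 = m - k := by omega
      rw [hmk]
    · simp
  have h2 : ∑ k ∈ range m, (m.choose (k + 1) : ℂ) * (a (m - k) * b (k + 1))
      = ∑ k ∈ range (m + 1), (m.choose (k + 1) : ℂ) * (a (m - k) * b (k + 1)) := by
    rw [Finset.sum_range_succ, Nat.choose_succ_self]
    simp
  rw [h1, h2]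
  rw [Finset.sum_range_succ' (fun k => ((m + 1).choose k : ℂ) * (a (m + 1 - k) * b k)) (m + 1)]
  have h3 : ∀ k, ((m + 1).choose (k + 1) : ℂ) = (m.choose k : ℂ) + (m.choose (k + 1) : ℂ) := by
    intro k; rw [Nat.choose_succ_succ]; push_cast; ring
  have h4 : ∑ k ∈ range (m + 1), ((m + 1).choose (k + 1) : ℂ) * (a (m + 1 - (k + 1)) * b (k + 1))
      = (∑ k ∈ range (m + 1), (m.choose k : ℂ) * (a (m - k) * b (k + 1)))
        + ∑ k ∈ range (m + 1), (m.choose (k + 1) : ℂ) * (a (m - k) * b (k + 1)) := by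
    rw [← Finset.sum_add_distrib]
    apply Finset.sum_congr rfl
    intro k hk
    rw [h3, Nat.succ_sub_succ]
    ring
  rw [h4]
  simp
  ring

lemma leibniz {s : Set ℂ} (hs : IsOpen s) {f g : ℂ → ℂ} (hf : AnalyticOnNhd ℂ f s)
    (hg : AnalyticOnNhd ℂ g s) (m : ℕ) :
    ∀ x ∈ s, iteratedDeriv m (fun w => f w * g w) x
      = ∑ k ∈ range (m + 1),
          (m.choose k : ℂ) * (iteratedDeriv (m - k) f x * iteratedDeriv k g x) := by
  induction m with
  | zero => intro x hx; simp
  | succ m IH =>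
    intro x hx
    rw [iteratedDeriv_succ]
    have h1 : deriv (iteratedDeriv m fun w => f w * g w) x
        = deriv (fun y => ∑ k ∈ range (m + 1),
            (m.choose k : ℂ) * (iteratedDeriv (m - k) f y * iteratedDeriv k g y)) x := by
      apply Filter.EventuallyEq.deriv_eq
      filter_upwards [hs.mem_nhds hx] with y hy using IH y hy
    have hdf : ∀ i, DifferentiableAt ℂ (iteratedDeriv i f) x := fun i =>
      (itd_analytic hf i x hx).differentiableAt
    have hdg : ∀ i, DifferentiableAt ℂ (iteratedDeriv i g) x := fun i =>
      (itd_analytic hg i x hx).differentiableAt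
    rw [h1, deriv_fun_sum (A := fun k y => (m.choose k : ℂ) *
        (iteratedDeriv (m - k) f y * iteratedDeriv k g y))
      (fun k _ => (((hdf (m - k)).mul (hdg k)).const_mul _))]
    have h2 : ∀ k ∈ range (m + 1),
        deriv (fun y => (m.choose k : ℂ) * (iteratedDeriv (m - k) f y * iteratedDeriv k g y)) x
          = (m.choose k : ℂ) * (iteratedDeriv (m - k + 1) f x * iteratedDeriv k g x
              + iteratedDeriv (m - k) f x * iteratedDeriv (k + 1) g x) := by
      intro k _
      rw [deriv_const_mul (d := fun y => iteratedDeriv (m - k) f y * iteratedDeriv k g y) _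
          ((hdf (m - k)).mul (hdg k)),
        deriv_fun_mul (hdf (m - k)) (hdg k), iteratedDeriv_succ, iteratedDeriv_succ]
    rw [Finset.sum_congr rfl h2]
    exact pascal_sum (fun i => iteratedDeriv i f x) (fun i => iteratedDeriv i g x) m

lemma vanish_mul {s : Set ℂ} (hs : IsOpen s) {f g : ℂ → ℂ} (hf : AnalyticOnNhd ℂ f s)
    (hg : AnalyticOnNhd ℂ g s) {z : ℂ} (hz : z ∈ s) {a b : ℕ}
    (hfa : ∀ m < a, iteratedDeriv m f z = 0) (hgb : ∀ m < b, iteratedDeriv m g z = 0) :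
    ∀ m < a + b, iteratedDeriv m (fun w => f w * g w) z = 0 := by
  intro m hm
  rw [leibniz hs hf hg m z hz]
  apply Finset.sum_eq_zero
  intro k hk
  rw [mem_range] at hk
  rcases lt_or_ge k b with h | h
  · rw [hgb k h]; ring
  · rw [hfa (m - k) (by omega)]; ring

lemma diag_mul {s : Set ℂ} (hs : IsOpen s) {f g : ℂ → ℂ} (hf : AnalyticOnNhd ℂ f s)
    (hg : AnalyticOnNhd ℂ g s) {z : ℂ} (hz : z ∈ s) {a b : ℕ}
    (hfa : ∀ m < a, iteratedDeriv m f z = 0) (hgb : ∀ m < b, iteratedDeriv m g z = 0) :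
    iteratedDeriv (a + b) (fun w => f w * g w) z
      = ((a + b).choose b : ℂ) * (iteratedDeriv a f z * iteratedDeriv b g z) := by
  rw [leibniz hs hf hg (a + b) z hz]
  rw [Finset.sum_eq_single b]
  · rw [Nat.add_sub_cancel]
  · intro k hk hkb
    rw [mem_range] at hk
    rcases lt_or_ge k b with h | h
    · rw [hgb k h]; ring
    · rw [hfa (a + b - k) (by omega)]; ring
  · intro hb
    exact absurd (mem_range.mpr (by omega)) hb

lemma pow_vanish {s : Set ℂ} (hs : IsOpen s) {u : ℂ → ℂ} (hu : AnalyticOnNhd ℂ u s) {z : ℂ}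
    (hz : z ∈ s) (h0 : u z = 0) :
    ∀ k : ℕ, ∀ m < k, iteratedDeriv m (fun w => u w ^ k) z = 0 := by
  intro k
  induction k with
  | zero => intro m hm; omega
  | succ k IH =>
    intro m hm
    have hfun : (fun w => u w ^ (k + 1)) = fun w => u w ^ k * u w := by
      funext w; rw [pow_succ]
    rw [hfun]
    exact vanish_mul hs (hu.pow k) hu hz IH
      (fun m' hm' => by obtain rfl := Nat.lt_one_iff.mp hm'; simpa) m (by omega)

lemma pow_diag {s : Set ℂ} (hs : IsOpen s) {u : ℂ → ℂ} (hu : AnalyticOnNhd ℂ u s) {z : ℂ}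
    (hz : z ∈ s) (h0 : u z = 0) :
    ∀ k : ℕ, iteratedDeriv k (fun w => u w ^ k) z = (k.factorial : ℂ) * deriv u z ^ k := by
  intro k
  induction k with
  | zero => simp
  | succ k IH =>
    have hfun : (fun w => u w ^ (k + 1)) = fun w => u w ^ k * u w := by
      funext w; rw [pow_succ]
    rw [hfun, diag_mul (f := fun w => u w ^ k) hs (hu.pow k) hu hz (pow_vanish hs hu hz h0 k)
      (fun m' hm' => by obtain rfl := Nat.lt_one_iff.mp hm'; simpa), IH, iteratedDeriv_one]
    rw [Nat.choose_one_right, Nat.factorial_succ]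
    push_cast
    ring

end WronskianAux

/-- The Wronskian determinant of `n+1` functions: `det (g_i^{(j)})`. -/
noncomputable def wronskian (n : ℕ) (g : Fin (n + 1) → ℂ → ℂ) (z : ℂ) : ℂ :=
  Matrix.det (Matrix.of fun i j : Fin (n + 1) => iteratedDeriv (j : ℕ) (g i) z)

/-- The Wronskian of `(1, v/1!, v²/2!, …, vⁿ/n!)` equals `(v')^{n(n+1)/2}`. -/
theorem wronskian_powers_div_factorial (n : ℕ) (hn : 1 ≤ n) (Ω : Set ℂ) (hΩ : IsOpen Ω)
    (v : ℂ → ℂ) (hv : DifferentiableOn ℂ v Ω) :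
    ∀ z ∈ Ω,
      wronskian n (fun i w => v w ^ (i : ℕ) / (Nat.factorial (i : ℕ) : ℂ)) z
        = deriv v z ^ (n * (n + 1) / 2) := by
  intro z hz
  have hA : AnalyticOnNhd ℂ v Ω := hv.analyticOnNhd hΩ
  set u : ℂ → ℂ := fun w => v w - v z with hu_def
  have hu : AnalyticOnNhd ℂ u Ω := hA.sub analyticOnNhd_const
  have hu0 : u z = 0 := sub_self _
  have hud : deriv u z = deriv v z := by
    rw [hu_def]
    exact deriv_sub_const (v z)
  have hupow : ∀ k : ℕ, AnalyticOnNhd ℂ (fun w => u w ^ k / (k.factorial : ℂ)) Ω := by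
    intro k
    exact (hu.pow k).div analyticOnNhd_const
      (fun x _ => Nat.cast_ne_zero.mpr (Nat.factorial_ne_zero k))
  have hdivfun : ∀ k : ℕ, (fun w => u w ^ k / (k.factorial : ℂ))
      = fun w => ((k.factorial : ℂ))⁻¹ * u w ^ k := by
    intro k; funext w; rw [div_eq_mul_inv, mul_comm]
  set A : Matrix (Fin (n + 1)) (Fin (n + 1)) ℂ := Matrix.of fun i k =>
    if (k : ℕ) ≤ (i : ℕ) then
      (v z) ^ ((i : ℕ) - (k : ℕ)) / (Nat.factorial ((i : ℕ) - (k : ℕ)) : ℂ)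
    else 0 with hAdef
  set B : Matrix (Fin (n + 1)) (Fin (n + 1)) ℂ := Matrix.of fun k j =>
    iteratedDeriv (j : ℕ) (fun w => u w ^ (k : ℕ) / (Nat.factorial (k : ℕ) : ℂ)) z with hBdef
  have hMAB : (Matrix.of fun i j : Fin (n + 1) =>
      iteratedDeriv (j : ℕ) (fun w => v w ^ (i : ℕ) / (Nat.factorial (i : ℕ) : ℂ)) z)
        = A * B := by
    ext i j
    rw [Matrix.mul_apply]
    have hfun : (fun w => v w ^ (i : ℕ) / (Nat.factorial (i : ℕ) : ℂ))
        = fun w => ∑ k : Fin (n + 1),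
            (A i k) * (u w ^ (k : ℕ) / (Nat.factorial (k : ℕ) : ℂ)) := by
      funext w
      simp only [hAdef, Matrix.of_apply]
      rw [Fin.sum_univ_eq_sum_range (fun k =>
        (if k ≤ (i : ℕ) then
            (v z) ^ ((i : ℕ) - k) / (Nat.factorial ((i : ℕ) - k) : ℂ)
          else 0) * (u w ^ k / (Nat.factorial k : ℂ))) (n + 1)]
      have hsub : Finset.range ((i : ℕ) + 1) ⊆ Finset.range (n + 1) := by
        apply Finset.range_subset_range.mpr
        have := i.isLt
        omega
      have hzero : ∀ x ∈ Finset.range (n + 1), x ∉ Finset.range ((i : ℕ) + 1) →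
          (if x ≤ (i : ℕ) then
              (v z) ^ ((i : ℕ) - x) / (Nat.factorial ((i : ℕ) - x) : ℂ)
            else 0) * (u w ^ x / (Nat.factorial x : ℂ)) = 0 := by
        intro x _ hx
        rw [Finset.mem_range] at hx
        rw [if_neg (by omega), zero_mul]
      rw [← Finset.sum_subset hsub hzero]
      have hvw : v w = u w + v z := by rw [hu_def]; ring
      rw [hvw, add_pow, Finset.sum_div]
      apply Finset.sum_congr rfl
      intro k hk
      rw [Finset.mem_range] at hk
      have hk' : k ≤ (i : ℕ) := by omega
      rw [if_pos hk']
      have hC : (i : ℕ).choose k * (k.factorial * ((i : ℕ) - k).factorial)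
          = (i : ℕ).factorial := by
        rw [← Nat.choose_mul_factorial_mul_factorial hk']
        ring
      have hC' : ((i : ℕ).choose k : ℂ) * ((k.factorial : ℂ) * (((i : ℕ) - k).factorial : ℂ))
          = ((i : ℕ).factorial : ℂ) := by
        exact_mod_cast congrArg (Nat.cast (R := ℂ)) hC
      have h1 : (k.factorial : ℂ) ≠ 0 := Nat.cast_ne_zero.mpr (Nat.factorial_ne_zero _)
      have h2 : (((i : ℕ) - k).factorial : ℂ) ≠ 0 :=
        Nat.cast_ne_zero.mpr (Nat.factorial_ne_zero _)
      have h3 : (((i : ℕ)).factorial : ℂ) ≠ 0 :=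
        Nat.cast_ne_zero.mpr (Nat.factorial_ne_zero _)
      field_simp
      linear_combination (u w ^ k * v z ^ ((i : ℕ) - k)) * hC'
    rw [Matrix.of_apply, hfun,
      itd_sum hΩ Finset.univ
        (fun k : Fin (n + 1) => fun w => A i k * (u w ^ (k : ℕ) / (Nat.factorial (k : ℕ) : ℂ)))
        (fun k _ => analyticOnNhd_const.mul (hupow (k : ℕ))) j z hz]
    apply Finset.sum_congr rfl
    intro k _
    rw [itd_const_mul hΩ (hupow (k : ℕ)) (A i k) (j : ℕ) z hz]
    rfl
  have htriA : A.BlockTriangular OrderDual.toDual := by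
    intro i j h
    have h' : (i : ℕ) < (j : ℕ) := h
    simp only [hAdef, Matrix.of_apply]
    rw [if_neg (by omega)]
  have hdetA : A.det = 1 := by
    rw [Matrix.det_of_lowerTriangular A htriA]
    apply Finset.prod_eq_one
    intro i _
    simp [hAdef]
  have htriB : B.BlockTriangular id := by
    intro k j h
    have h' : (j : ℕ) < (k : ℕ) := h
    simp only [hBdef, Matrix.of_apply]
    rw [hdivfun, itd_const_mul (h := fun w => u w ^ (k : ℕ)) hΩ (hu.pow (k : ℕ)) _ (j : ℕ) z hz,
      pow_vanish hΩ hu hz hu0 (k : ℕ) (j : ℕ) h', mul_zero]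
  have hdetB : B.det = ∏ k : Fin (n + 1), deriv v z ^ (k : ℕ) := by
    rw [Matrix.det_of_upperTriangular htriB]
    apply Finset.prod_congr rfl
    intro k _
    simp only [hBdef, Matrix.of_apply]
    rw [hdivfun, itd_const_mul (h := fun w => u w ^ (k : ℕ)) hΩ (hu.pow (k : ℕ)) _ (k : ℕ) z hz,
      pow_diag hΩ hu hz hu0 (k : ℕ), hud, ← mul_assoc,
      inv_mul_cancel₀ (Nat.cast_ne_zero.mpr (Nat.factorial_ne_zero _)), one_mul]
  rw [wronskian, hMAB, Matrix.det_mul, hdetA, hdetB, one_mul]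
  rw [Fin.prod_univ_eq_prod_range (fun k => deriv v z ^ k) (n + 1)]
  rw [Finset.prod_pow_eq_pow_sum]
  congr 1
  have h2 := Finset.sum_range_id_mul_two (n + 1)
  simp only [Nat.add_sub_cancel] at h2
  have h3 : n * (n + 1) = (n + 1) * n := Nat.mul_comm _ _
  omega
end

section
/- Let v : Ω → ℂ be holomorphic on an open set Ω ⊆ ℂ. Then the Wronskian determinant of the n+1 functions (1, v, v², …, vⁿ) equals (∏_{k=1}^{n} k!) · (v')^{n(n+1)/2}. -/
open Finset

private lemma itdw_eq_itd {Ω : Set ℂ} (hΩ : IsOpen Ω) {z : ℂ} (hz : z ∈ Ω) (j : ℕ)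
    (f : ℂ → ℂ) : iteratedDerivWithin j f Ω z = iteratedDeriv j f z := by
  rw [iteratedDerivWithin_eq_iteratedFDerivWithin, iteratedDeriv_eq_iteratedFDeriv,
    iteratedFDerivWithin_of_isOpen j hΩ hz]

private lemma itdw_sum {s : Set ℂ} (hs : UniqueDiffOn ℂ s) {x : ℂ} (hx : x ∈ s)
    {ι : Type*} (t : Finset ι) (j : ℕ) (f : ι → ℂ → ℂ)
    (hf : ∀ i ∈ t, ContDiffOn ℂ j (f i) s) :
    iteratedDerivWithin j (fun w => ∑ i ∈ t, f i w) s x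
      = ∑ i ∈ t, iteratedDerivWithin j (f i) s x := by
  classical
  induction t using Finset.cons_induction with
  | empty =>
      simp only [Finset.sum_empty]
      rw [iteratedDerivWithin_eq_iteratedFDerivWithin]
      change (iteratedFDerivWithin ℂ j (fun _ : ℂ => (0:ℂ)) s x) (fun _ => 1) = 0
      rw [iteratedFDerivWithin_zero_fun]
      simp
  | cons a t ha ih =>
      simp only [Finset.sum_cons]
      have h1 : ContDiffOn ℂ j (f a) s := hf a (Finset.mem_cons_self a t)
      have h2 : ContDiffOn ℂ j (fun w => ∑ i ∈ t, f i w) s := by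
        apply ContDiffOn.sum
        intro i hi
        exact hf i (Finset.mem_cons_of_mem hi)
      have := iteratedDerivWithin_add (f := f a) (g := fun w => ∑ i ∈ t, f i w)
        hx hs (h1 x hx) (h2 x hx)
      rw [show (fun w => f a w + ∑ i ∈ t, f i w)
            = (f a + fun w => ∑ i ∈ t, f i w) from rfl, this,
        ih fun i hi => hf i (Finset.mem_cons_of_mem hi)]

private lemma vanish {Ω : Set ℂ} (hΩ : IsOpen Ω) {z : ℂ} (hz : z ∈ Ω)
    {f : ℂ → ℂ} (hf : AnalyticOnNhd ℂ f Ω) (hfz : f z = 0) :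
    ∀ j k : ℕ, ∀ g : ℂ → ℂ, AnalyticOnNhd ℂ g Ω → j < k →
      iteratedDerivWithin j (fun w => f w ^ k * g w) Ω z = 0 := by
  have hs : UniqueDiffOn ℂ Ω := hΩ.uniqueDiffOn
  intro j
  induction j with
  | zero =>
      intro k g hg hjk
      simp only [iteratedDerivWithin_zero]
      rw [hfz, zero_pow (by omega), zero_mul]
  | succ j ih =>
      intro k g hg hjk
      have hkpos : 2 ≤ k := by omega
      have hEq : Set.EqOn (derivWithin (fun w => f w ^ k * g w) Ω)
          (fun w => f w ^ (k - 1) * ((k : ℂ) * deriv f w * g w)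
            + f w ^ k * deriv g w) Ω := by
        intro y hy
        have hfy : DifferentiableWithinAt ℂ f Ω y := ((hf y hy).differentiableAt).differentiableWithinAt
        have hgy : DifferentiableWithinAt ℂ g Ω y := ((hg y hy).differentiableAt).differentiableWithinAt
        have hu : UniqueDiffWithinAt ℂ Ω y := hs y hy
        rw [derivWithin_fun_mul (c := fun w => f w ^ k) (hfy.pow k) hgy, derivWithin_fun_pow hfy,
          derivWithin_of_isOpen hΩ hy, derivWithin_of_isOpen hΩ hy]
        ring
      rw [iteratedDerivWithin_succ', iteratedDerivWithin_congr hEq hz]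
      have hf' : AnalyticOnNhd ℂ (deriv f) Ω := hf.deriv
      have hg' : AnalyticOnNhd ℂ (deriv g) Ω := hg.deriv
      have hA : AnalyticOnNhd ℂ (fun w => f w ^ (k - 1) * ((k : ℂ) * deriv f w * g w)) Ω :=
        (hf.pow _).mul (((analyticOnNhd_const.mul hf').mul hg))
      have hB : AnalyticOnNhd ℂ (fun w => f w ^ k * deriv g w) Ω := (hf.pow _).mul hg'
      have hadd := iteratedDerivWithin_add (n := j)
        (f := fun w => f w ^ (k - 1) * ((k : ℂ) * deriv f w * g w))
        (g := fun w => f w ^ k * deriv g w) hz hs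
        ((hA.contDiffOn hs) z hz) ((hB.contDiffOn hs) z hz)
      rw [show (fun w => f w ^ (k - 1) * ((k : ℂ) * deriv f w * g w)
            + f w ^ k * deriv g w)
          = ((fun w => f w ^ (k - 1) * ((k : ℂ) * deriv f w * g w))
            + fun w => f w ^ k * deriv g w) from rfl, hadd,
        ih (k - 1) _ ((analyticOnNhd_const.mul hf').mul hg) (by omega),
        ih k _ hg' (by omega), add_zero]

private lemma diag {Ω : Set ℂ} (hΩ : IsOpen Ω) {z : ℂ} (hz : z ∈ Ω)
    {f : ℂ → ℂ} (hf : AnalyticOnNhd ℂ f Ω) (hfz : f z = 0) :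
    ∀ k : ℕ, ∀ g : ℂ → ℂ, AnalyticOnNhd ℂ g Ω →
      iteratedDerivWithin k (fun w => f w ^ k * g w) Ω z
        = (Nat.factorial k : ℂ) * deriv f z ^ k * g z := by
  have hs : UniqueDiffOn ℂ Ω := hΩ.uniqueDiffOn
  intro k
  induction k with
  | zero => intro g hg; simp [iteratedDerivWithin_zero]
  | succ k ih =>
      intro g hg
      have hEq : Set.EqOn (derivWithin (fun w => f w ^ (k + 1) * g w) Ω)
          (fun w => f w ^ k * (((k : ℂ) + 1) * deriv f w * g w)
            + f w ^ (k + 1) * deriv g w) Ω := by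
        intro y hy
        have hfy : DifferentiableWithinAt ℂ f Ω y := ((hf y hy).differentiableAt).differentiableWithinAt
        have hgy : DifferentiableWithinAt ℂ g Ω y := ((hg y hy).differentiableAt).differentiableWithinAt
        have hu : UniqueDiffWithinAt ℂ Ω y := hs y hy
        rw [derivWithin_fun_mul (c := fun w => f w ^ (k+1)) (hfy.pow (k+1)) hgy, derivWithin_fun_pow hfy,
          derivWithin_of_isOpen hΩ hy, derivWithin_of_isOpen hΩ hy]
        push_cast
        ring_nf
      rw [iteratedDerivWithin_succ', iteratedDerivWithin_congr hEq hz]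
      have hf' : AnalyticOnNhd ℂ (deriv f) Ω := hf.deriv
      have hg' : AnalyticOnNhd ℂ (deriv g) Ω := hg.deriv
      have hA : AnalyticOnNhd ℂ (fun w => f w ^ k * (((k : ℂ) + 1) * deriv f w * g w)) Ω :=
        (hf.pow _).mul (((analyticOnNhd_const.mul hf').mul hg))
      have hB : AnalyticOnNhd ℂ (fun w => f w ^ (k + 1) * deriv g w) Ω := (hf.pow _).mul hg'
      have hadd := iteratedDerivWithin_add (n := k)
        (f := fun w => f w ^ k * (((k : ℂ) + 1) * deriv f w * g w))
        (g := fun w => f w ^ (k + 1) * deriv g w) hz hs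
        ((hA.contDiffOn hs) z hz) ((hB.contDiffOn hs) z hz)
      rw [show (fun w => f w ^ k * (((k : ℂ) + 1) * deriv f w * g w)
            + f w ^ (k + 1) * deriv g w)
          = ((fun w => f w ^ k * (((k : ℂ) + 1) * deriv f w * g w))
            + fun w => f w ^ (k + 1) * deriv g w) from rfl, hadd,
        ih _ ((analyticOnNhd_const.mul hf').mul hg),
        vanish hΩ hz hf hfz k (k + 1) _ hg' (by omega), add_zero,
        Nat.factorial_succ]
      push_cast
      ring

/-- The Wronskian of `(1, v, v², …, vⁿ)` equals `(∏_{k=1}^n k!) · (v')^{n(n+1)/2}`. -/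
theorem wronskian_powers (n : ℕ) (Ω : Set ℂ) (hΩ : IsOpen Ω)
    (v : ℂ → ℂ) (hv : DifferentiableOn ℂ v Ω) :
    ∀ z ∈ Ω,
      wronskian n (fun i w => v w ^ (i : ℕ)) z
        = (∏ k ∈ Finset.Icc 1 n, (Nat.factorial k : ℂ)) * deriv v z ^ (n * (n + 1) / 2) := by
  intro z hz
  have hs : UniqueDiffOn ℂ Ω := hΩ.uniqueDiffOn
  have hva : AnalyticOnNhd ℂ v Ω := hv.analyticOnNhd hΩ
  set c : ℂ := v z with hc
  set u : ℂ → ℂ := fun w => v w - c with hu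
  have hua : AnalyticOnNhd ℂ u Ω := hva.sub analyticOnNhd_const
  have huz : u z = 0 := by simp [hu, hc]
  have hderiv_u : deriv u z = deriv v z := by
    simp only [hu]; exact deriv_sub_const c
  -- the matrices
  set A : Matrix (Fin (n + 1)) (Fin (n + 1)) ℂ :=
    Matrix.of fun i k : Fin (n + 1) => ((i : ℕ).choose (k : ℕ) : ℂ) * c ^ ((i : ℕ) - (k : ℕ))
    with hA
  set B : Matrix (Fin (n + 1)) (Fin (n + 1)) ℂ :=
    Matrix.of fun k j : Fin (n + 1) =>
      iteratedDerivWithin (j : ℕ) (fun w => u w ^ (k : ℕ)) Ω z with hB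
  have hM : (Matrix.of fun i j : Fin (n + 1) =>
      iteratedDeriv (j : ℕ) (fun w => v w ^ (i : ℕ)) z) = A * B := by
    ext i j
    rw [Matrix.mul_apply]
    have hpt : (fun w => v w ^ (i : ℕ))
        = fun w => ∑ k ∈ Finset.range (n + 1),
            (((i : ℕ).choose k : ℂ) * c ^ ((i : ℕ) - k)) * u w ^ k := by
      funext w
      have : v w = u w + c := by simp [hu]
      rw [this, add_pow]
      rw [← Finset.sum_subset (Finset.range_subset_range.2 (Nat.succ_le_succ i.is_le))]
      · apply Finset.sum_congr rfl
        intro k _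
        ring
      · intro k _ hk
        simp only [Finset.mem_range, not_lt] at hk
        rw [Nat.choose_eq_zero_of_lt (by omega)]
        simp
    have := itdw_sum hs hz (Finset.range (n + 1)) (j : ℕ)
      (fun k w => (((i : ℕ).choose k : ℂ) * c ^ ((i : ℕ) - k)) * u w ^ k)
      (fun k _ => ((analyticOnNhd_const.mul (hua.pow k)).contDiffOn hs))
    rw [Matrix.of_apply, ← itdw_eq_itd hΩ hz, hpt, this]
    rw [← Fin.sum_univ_eq_sum_range]
    apply Finset.sum_congr rfl
    intro k _
    rw [iteratedDerivWithin_const_mul hz hs _ (f := fun w => u w ^ (k : ℕ)) ((hua.pow (k : ℕ)).contDiffOn hs z hz)]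
    rfl
  rw [wronskian, hM, Matrix.det_mul]
  have hdetA : A.det = 1 := by
    have htri : A.BlockTriangular OrderDual.toDual := by
      intro i k hik
      simp only [OrderDual.toDual_lt_toDual] at hik
      simp only [hA, Matrix.of_apply]
      rw [Nat.choose_eq_zero_of_lt (by exact_mod_cast hik)]
      simp
    rw [Matrix.det_of_lowerTriangular A htri]
    apply Finset.prod_eq_one
    intro i _
    simp [hA]
  have hdetB : B.det = (∏ k ∈ Finset.Icc 1 n, (Nat.factorial k : ℂ))
      * deriv v z ^ (n * (n + 1) / 2) := by
    have htri : B.BlockTriangular id := by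
      intro k j hjk
      simp only [id] at hjk
      simp only [hB, Matrix.of_apply]
      have h1 : (fun w => u w ^ (k : ℕ)) = fun w => u w ^ (k : ℕ) * (fun _ => (1:ℂ)) w := by
        funext w; simp
      rw [h1, vanish hΩ hz hua huz (j : ℕ) (k : ℕ) _ analyticOnNhd_const
        (by exact_mod_cast hjk)]
    rw [Matrix.det_of_upperTriangular htri]
    have hdiag : ∀ k : Fin (n + 1),
        B k k = (Nat.factorial (k : ℕ) : ℂ) * deriv v z ^ (k : ℕ) := by
      intro k
      simp only [hB, Matrix.of_apply]
      have h1 : (fun w => u w ^ (k : ℕ)) = fun w => u w ^ (k : ℕ) * (fun _ => (1:ℂ)) w := by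
        funext w; simp
      rw [h1, diag hΩ hz hua huz (k : ℕ) _ analyticOnNhd_const, hderiv_u]
      simp
    calc ∏ k : Fin (n + 1), B k k
        = ∏ k : Fin (n + 1), (Nat.factorial (k : ℕ) : ℂ) * deriv v z ^ (k : ℕ) := by
          exact Finset.prod_congr rfl fun k _ => hdiag k
      _ = (∏ k ∈ Finset.range (n + 1), (Nat.factorial k : ℂ))
            * deriv v z ^ (∑ k ∈ Finset.range (n + 1), k) := by
          rw [Finset.prod_mul_distrib,
            Fin.prod_univ_eq_prod_range (fun k => ((Nat.factorial k : ℕ) : ℂ)) (n+1),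
            Fin.prod_univ_eq_prod_range (fun k => deriv v z ^ k) (n+1),
            Finset.prod_pow_eq_pow_sum]
      _ = (∏ k ∈ Finset.Icc 1 n, (Nat.factorial k : ℂ))
            * deriv v z ^ (n * (n + 1) / 2) := by
          congr 1
          · rw [Finset.range_eq_Ico, Finset.prod_eq_prod_Ico_succ_bot (by omega),
              Finset.Ico_add_one_right_eq_Icc]
            simp
          · congr 1
            rw [Finset.sum_range_id, Nat.add_sub_cancel, Nat.mul_comm]
  rw [hdetA, hdetB, one_mul]
end

section
/- Let v₀, v₁ : Ω → ℂ be holomorphic on an open set Ω ⊆ ℂ with v₀ v₁' − v₁ v₀' ≡ 1 on Ω. Then the Wronskian determinant of the n+1 functions ((1/√(n!)) v₀ⁿ, (1/√((n−1)!·1!)) v₀^{n−1} v₁, …, (1/√(k!(n−k)!)) v₀^{n−k} v₁^{k}, …, (1/√(n!)) v₁ⁿ) is identically 1 on Ω. -/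
section Aux

open Polynomial Finset


noncomputable def wCoef (t h : ℂ → ℂ) : ℕ → ℕ → ℂ → ℂ
  | 0, 0 => h
  | 0, _+1 => fun _ => 0
  | j+1, 0 => deriv (wCoef t h j 0)
  | j+1, m+1 => fun z => deriv (wCoef t h j (m+1)) z + deriv t z * wCoef t h j m z

lemma wCoef_gt (t h : ℂ → ℂ) : ∀ j m : ℕ, j < m → wCoef t h j m = fun _ => 0 := by
  intro j
  induction j with
  | zero =>
    rintro (_|m) hm
    · omega
    · rfl
  | succ j ih =>
    rintro (_|m) hm
    · omega
    · show (fun z => deriv (wCoef t h j (m+1)) z + deriv t z * wCoef t h j m z) = _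
      rw [ih (m+1) (by omega), ih m (by omega)]
      funext z
      simp

lemma wCoef_diag (t h : ℂ → ℂ) : ∀ j : ℕ, wCoef t h j j = fun z => (deriv t z) ^ j * h z := by
  intro j
  induction j with
  | zero => funext z; simp [wCoef]
  | succ j ih =>
    show (fun z => deriv (wCoef t h j (j+1)) z + deriv t z * wCoef t h j j z) = _
    rw [wCoef_gt t h j (j+1) (by omega), ih]
    funext z
    simp [pow_succ]
    ring

lemma wCoef_analytic {t h : ℂ → ℂ} {U : Set ℂ}
    (ht : AnalyticOnNhd ℂ t U) (hh : AnalyticOnNhd ℂ h U) :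
    ∀ j m : ℕ, AnalyticOnNhd ℂ (wCoef t h j m) U := by
  intro j
  induction j with
  | zero =>
    rintro (_|m)
    · exact hh
    · exact analyticOnNhd_const
  | succ j ih =>
    rintro (_|m)
    · exact (ih 0).deriv
    · exact ((ih (m+1)).deriv).add (ht.deriv.mul (ih m))

lemma wCoef_main {t h : ℂ → ℂ} {U : Set ℂ} (hU : IsOpen U)
    (ht : AnalyticOnNhd ℂ t U) (hh : AnalyticOnNhd ℂ h U) (p : ℂ[X]) :
    ∀ j, ∀ z ∈ U, iteratedDeriv j (fun w => h w * p.eval (t w)) z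
      = ∑ m ∈ range (j+1), wCoef t h j m z * (derivative^[m] p).eval (t z) := by
  intro j
  induction j with
  | zero => intro z hz; simp [wCoef]
  | succ j ih =>
    intro z hz
    have hloc : iteratedDeriv j (fun w => h w * p.eval (t w)) =ᶠ[nhds z]
        fun z => ∑ m ∈ range (j+1), wCoef t h j m z * (derivative^[m] p).eval (t z) := by
      filter_upwards [hU.mem_nhds hz] with w hw using ih w hw
    rw [iteratedDeriv_succ, hloc.deriv_eq]
    have hterm : ∀ m ∈ range (j+1),
        HasDerivAt (fun z => wCoef t h j m z * (derivative^[m] p).eval (t z))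
        (deriv (wCoef t h j m) z * (derivative^[m] p).eval (t z)
          + wCoef t h j m z * (deriv t z * (derivative^[m+1] p).eval (t z))) z := by
      intro m _
      have h1 : HasDerivAt (wCoef t h j m) (deriv (wCoef t h j m) z) z :=
        ((wCoef_analytic ht hh j m z hz).differentiableAt).hasDerivAt
      have h2 : HasDerivAt (fun z => (derivative^[m] p).eval (t z))
          (deriv t z * (derivative^[m+1] p).eval (t z)) z := by
        have h3 : HasDerivAt t (deriv t z) z := ((ht z hz).differentiableAt).hasDerivAt
        have h4 := (Polynomial.hasDerivAt (derivative^[m] p) (t z)).comp z h3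
        rw [← Function.iterate_succ_apply' derivative] at h4
        rw [mul_comm] at h4
        exact h4
      exact h1.mul h2
    rw [(HasDerivAt.fun_sum hterm).deriv]
    -- sum juggling
    have key : ∀ i : ℕ, wCoef t h (j+1) (i+1) z
        = deriv (wCoef t h j (i+1)) z + deriv t z * wCoef t h j i z := fun i => rfl
    have key0 : wCoef t h (j+1) 0 z = deriv (wCoef t h j 0) z := rfl
    have hzero : deriv (wCoef t h j (j+1)) z = 0 := by
      rw [wCoef_gt t h j (j+1) (by omega)]
      simp
    rw [Finset.sum_range_succ'
      (fun m => wCoef t h (j+1) m z * (derivative^[m] p).eval (t z)) (j+1)]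
    simp only [key, key0]
    rw [Finset.sum_add_distrib]
    rw [Finset.sum_range_succ'
      (fun m => deriv (wCoef t h j m) z * (derivative^[m] p).eval (t z)) j]
    rw [show (∑ i ∈ range (j+1), (deriv (wCoef t h j (i+1)) z + deriv t z * wCoef t h j i z)
          * (derivative^[i+1] p).eval (t z))
        = ∑ i ∈ range (j+1), (deriv (wCoef t h j (i+1)) z * (derivative^[i+1] p).eval (t z)
          + wCoef t h j i z * (deriv t z * (derivative^[i+1] p).eval (t z))) from
      Finset.sum_congr rfl fun i _ => by ring]
    rw [Finset.sum_add_distrib, Finset.sum_range_succ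
      (fun i => deriv (wCoef t h j (i+1)) z * (derivative^[i+1] p).eval (t z)) j]
    rw [hzero]
    ring

/-- locality of iterated derivatives -/
lemma iteratedDeriv_congr_nhds {f g : ℂ → ℂ} {z : ℂ} (hfg : f =ᶠ[nhds z] g) (j : ℕ) :
    iteratedDeriv j f z = iteratedDeriv j g z := by
  have : ∀ j : ℕ, iteratedDeriv j f =ᶠ[nhds z] iteratedDeriv j g := by
    intro j
    induction j with
    | zero => simpa [iteratedDeriv_zero] using hfg
    | succ j ih => simpa only [iteratedDeriv_succ] using ih.deriv
  exact (this j).self_of_nhds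

/-- The key determinant factorization. -/
lemma det_iteratedDeriv (n : ℕ) {U : Set ℂ} (hU : IsOpen U) {t h : ℂ → ℂ}
    (ht : AnalyticOnNhd ℂ t U) (hh : AnalyticOnNhd ℂ h U)
    (q : ℕ → ℂ[X]) {z₀ : ℂ} (hz₀ : z₀ ∈ U) :
    Matrix.det (Matrix.of fun k j : Fin (n+1) =>
        iteratedDeriv (j:ℕ) (fun w => h w * (q (k:ℕ)).eval (t w)) z₀)
      = Matrix.det (Matrix.of fun k m : Fin (n+1) =>
          (derivative^[(m:ℕ)] (q (k:ℕ))).eval (t z₀))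
        * ∏ j : Fin (n+1), ((deriv t z₀) ^ (j:ℕ) * h z₀) := by
  have hentry : ∀ k j : Fin (n+1),
      iteratedDeriv (j:ℕ) (fun w => h w * (q (k:ℕ)).eval (t w)) z₀
        = ∑ m : Fin (n+1), (derivative^[(m:ℕ)] (q (k:ℕ))).eval (t z₀)
            * wCoef t h (j:ℕ) (m:ℕ) z₀ := by
    intro k j
    rw [wCoef_main hU ht hh (q k) j z₀ hz₀]
    rw [Fin.sum_univ_eq_sum_range
      (fun m => (derivative^[m] (q (k:ℕ))).eval (t z₀) * wCoef t h (j:ℕ) m z₀) (n+1)]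
    rw [← Finset.sum_range_add_sum_Ico _ (Nat.succ_le_succ j.is_le)]
    rw [show ∑ m ∈ Ico ((j:ℕ)+1) (n+1),
          (derivative^[m] (q (k:ℕ))).eval (t z₀) * wCoef t h (j:ℕ) m z₀ = 0 from
      Finset.sum_eq_zero fun m hm => by
        rw [wCoef_gt t h (j:ℕ) m (by exact (Finset.mem_Ico.mp hm).1)]
        simp]
    rw [add_zero]
    exact Finset.sum_congr rfl fun m _ => mul_comm _ _
  have hM : (Matrix.of fun k j : Fin (n+1) =>
        iteratedDeriv (j:ℕ) (fun w => h w * (q (k:ℕ)).eval (t w)) z₀)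
      = (Matrix.of fun k m : Fin (n+1) => (derivative^[(m:ℕ)] (q (k:ℕ))).eval (t z₀))
        * (Matrix.of fun m j : Fin (n+1) => wCoef t h (j:ℕ) (m:ℕ) z₀) := by
    ext k j
    simpa [Matrix.mul_apply] using hentry k j
  rw [hM, Matrix.det_mul]
  congr 1
  have : (Matrix.of fun m j : Fin (n+1) => wCoef t h (j:ℕ) (m:ℕ) z₀)
      = (Matrix.of fun j m : Fin (n+1) => wCoef t h (j:ℕ) (m:ℕ) z₀).transpose := rfl
  rw [this, Matrix.det_transpose]
  rw [Matrix.det_of_lowerTriangular _ (by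
    intro j m hlt
    have : (j:ℕ) < (m:ℕ) := hlt
    simp only [Matrix.of_apply]
    rw [wCoef_gt t h (j:ℕ) (m:ℕ) this])]
  refine Finset.prod_congr rfl fun j _ => ?_
  simp only [Matrix.of_apply]
  rw [wCoef_diag t h (j:ℕ)]

lemma q_expand (n k : ℕ) (hk : k ≤ n) (a c : ℂ) :
    a • ((Polynomial.C (-c) * X + 1) ^ (n - k) * X ^ k : ℂ[X])
      = ∑ j ∈ range (n+1),
          (if k ≤ j then a * (-c)^(j-k) * (((n-k).choose (j-k) : ℕ) : ℂ) else 0) • (X:ℂ[X]) ^ j := by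
  have hsplit : ∑ j ∈ range (n+1),
      (if k ≤ j then a * (-c)^(j-k) * (((n-k).choose (j-k) : ℕ) : ℂ) else 0) • (X:ℂ[X]) ^ j
      = ∑ j ∈ Ico k (n+1), (a * (-c)^(j-k) * (((n-k).choose (j-k) : ℕ) : ℂ)) • (X:ℂ[X]) ^ j := by
    rw [range_eq_Ico, ← Finset.sum_Ico_consecutive _ (Nat.zero_le k) (by omega)]
    rw [show ∑ j ∈ Ico 0 k,
        (if k ≤ j then a * (-c)^(j-k) * (((n-k).choose (j-k) : ℕ) : ℂ) else 0) • (X:ℂ[X]) ^ j = 0 from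
      Finset.sum_eq_zero fun j hj => by
        rw [if_neg (by simp at hj; omega)]; simp]
    rw [zero_add]
    exact Finset.sum_congr rfl fun j hj => by rw [if_pos (by simp at hj; omega)]
  rw [hsplit, Finset.sum_Ico_eq_sum_range]
  have hnk : n + 1 - k = n - k + 1 := by omega
  rw [hnk, add_pow, Finset.sum_mul, Finset.smul_sum]
  refine Finset.sum_congr rfl fun i hi => ?_
  have h1 : k + i - k = i := by omega
  rw [h1]
  simp only [smul_eq_C_mul, mul_pow, one_pow, map_mul, map_pow, pow_add, mul_one]
  rw [← map_natCast (Polynomial.C : ℂ →+* ℂ[X]) ((n-k).choose i)]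
  ring

lemma det_evalMat (n : ℕ) (c τ : ℂ) (cc : ℕ → ℂ) :
    Matrix.det (Matrix.of fun k m : Fin (n+1) =>
        (derivative^[(m:ℕ)]
          (cc (k:ℕ) • ((Polynomial.C (-c) * X + 1) ^ (n - (k:ℕ)) * X ^ (k:ℕ) : ℂ[X]))).eval τ)
      = ∏ k : Fin (n+1), (cc (k:ℕ) * (((k:ℕ).factorial : ℕ) : ℂ)) := by
  have hentry : ∀ k m : Fin (n+1),
      (derivative^[(m:ℕ)]
          (cc (k:ℕ) • ((Polynomial.C (-c) * X + 1) ^ (n - (k:ℕ)) * X ^ (k:ℕ) : ℂ[X]))).eval τ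
      = ∑ j : Fin (n+1),
          (if (k:ℕ) ≤ (j:ℕ) then cc (k:ℕ) * (-c)^((j:ℕ)-(k:ℕ))
              * ((((n-(k:ℕ)).choose ((j:ℕ)-(k:ℕ))) : ℕ) : ℂ) else 0)
          * ((((j:ℕ).descFactorial (m:ℕ) : ℕ) : ℂ) * τ ^ ((j:ℕ) - (m:ℕ))) := by
    intro k m
    rw [q_expand n (k:ℕ) k.is_le (cc (k:ℕ)) c]
    rw [iterate_derivative_sum, eval_finset_sum]
    rw [Fin.sum_univ_eq_sum_range (fun j =>
      (if (k:ℕ) ≤ j then cc (k:ℕ) * (-c)^(j-(k:ℕ))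
              * ((((n-(k:ℕ)).choose (j-(k:ℕ))) : ℕ) : ℂ) else 0)
          * (((j.descFactorial (m:ℕ) : ℕ) : ℂ) * τ ^ (j - (m:ℕ)))) (n+1)]
    refine Finset.sum_congr rfl fun j hj => ?_
    rw [iterate_derivative_smul, iterate_derivative_X_pow_eq_smul]
    by_cases hkj : (k:ℕ) ≤ j
    · simp only [if_pos hkj, eval_smul, eval_pow, eval_X, smul_eq_mul, nsmul_eq_mul]
      try ring
    · simp only [if_neg hkj]
      simp
  have hM : (Matrix.of fun k m : Fin (n+1) =>
      (derivative^[(m:ℕ)]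
          (cc (k:ℕ) • ((Polynomial.C (-c) * X + 1) ^ (n - (k:ℕ)) * X ^ (k:ℕ) : ℂ[X]))).eval τ)
      = (Matrix.of fun k j : Fin (n+1) =>
          (if (k:ℕ) ≤ (j:ℕ) then cc (k:ℕ) * (-c)^((j:ℕ)-(k:ℕ))
              * ((((n-(k:ℕ)).choose ((j:ℕ)-(k:ℕ))) : ℕ) : ℂ) else 0))
        * (Matrix.of fun j m : Fin (n+1) =>
            (((j:ℕ).descFactorial (m:ℕ) : ℕ) : ℂ) * τ ^ ((j:ℕ) - (m:ℕ))) := by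
    ext k m
    simpa [Matrix.mul_apply] using hentry k m
  rw [hM, Matrix.det_mul]
  rw [Matrix.det_of_upperTriangular (by
    intro k j hlt
    have hjk : (j:ℕ) < (k:ℕ) := hlt
    simp only [Matrix.of_apply]
    rw [if_neg (by omega)])]
  rw [Matrix.det_of_lowerTriangular _ (by
    intro j m hlt
    simp only [Matrix.of_apply]
    have : (j:ℕ) < (m:ℕ) := hlt
    rw [Nat.descFactorial_eq_zero_iff_lt.mpr this]
    simp)]
  rw [← Finset.prod_mul_distrib]
  refine Finset.prod_congr rfl fun k _ => ?_
  simp [Nat.descFactorial_self]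

lemma prod_sqrt_fact (n : ℕ) :
    ∏ k ∈ range (n+1), Real.sqrt (((k.factorial * (n - k).factorial : ℕ) : ℝ))
      = ∏ k ∈ range (n+1), (k.factorial : ℝ) := by
  have hb : (0:ℝ) ≤ ∏ k ∈ range (n+1), (k.factorial : ℝ) :=
    Finset.prod_nonneg fun k _ => by positivity
  have ha : (0:ℝ) ≤ ∏ k ∈ range (n+1), Real.sqrt (((k.factorial * (n - k).factorial : ℕ) : ℝ)) :=
    Finset.prod_nonneg fun k _ => Real.sqrt_nonneg _
  have hsq : (∏ k ∈ range (n+1), Real.sqrt (((k.factorial * (n - k).factorial : ℕ) : ℝ)))^2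
      = (∏ k ∈ range (n+1), (k.factorial : ℝ))^2 := by
    rw [← Finset.prod_pow]
    have h1 : ∀ k ∈ range (n+1),
        Real.sqrt (((k.factorial * (n - k).factorial : ℕ) : ℝ))^2
          = (k.factorial : ℝ) * ((n-k).factorial : ℝ) := by
      intro k _
      rw [Real.sq_sqrt (by positivity)]
      push_cast
      ring
    rw [Finset.prod_congr rfl h1, Finset.prod_mul_distrib]
    have h2 : ∏ k ∈ range (n+1), (((n-k).factorial : ℝ)) = ∏ k ∈ range (n+1), (k.factorial : ℝ) := by
      have := Finset.prod_range_reflect (fun j => ((j.factorial : ℝ))) (n+1)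
      simpa using this
    rw [h2, sq]
  rw [← Real.sqrt_sq ha, ← Real.sqrt_sq hb, hsq]


end Aux

open Finset in
/-- If `v₀ v₁' − v₁ v₀' ≡ 1`, then the Wronskian of the canonical lifting
`((1/√(k!(n−k)!)) v₀^{n−k} v₁^{k})_{0 ≤ k ≤ n}` of the rational normal curve
composed with `[v₀ : v₁]` is identically `1`. -/
theorem wronskian_rational_normal_lifting (n : ℕ) (Ω : Set ℂ) (hΩ : IsOpen Ω)
    (v₀ v₁ : ℂ → ℂ) (h0 : DifferentiableOn ℂ v₀ Ω) (h1 : DifferentiableOn ℂ v₁ Ω)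
    (hw : ∀ z ∈ Ω, v₀ z * deriv v₁ z - v₁ z * deriv v₀ z = 1) :
    ∀ z ∈ Ω,
      wronskian n
        (fun k w =>
          ((Real.sqrt ((Nat.factorial (k : ℕ) * Nat.factorial (n - (k : ℕ)) : ℕ)) : ℂ))⁻¹ *
            (v₀ w ^ (n - (k : ℕ)) * v₁ w ^ (k : ℕ))) z = 1 := by
  intro z₀ hz₀
  obtain ⟨c, hc⟩ : ∃ c : ℂ, v₀ z₀ + c * v₁ z₀ ≠ 0 := by
    by_cases h : v₀ z₀ = 0
    · refine ⟨1, fun hcon => ?_⟩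
      have hg0 : v₁ z₀ = 0 := by rw [h] at hcon; simpa using hcon
      have h2 := hw z₀ hz₀
      rw [h, hg0] at h2
      simp at h2
    · exact ⟨0, by simpa using h⟩
  set F : ℂ → ℂ := fun z => v₀ z + c * v₁ z with hFdef
  set U : Set ℂ := Ω ∩ (F ⁻¹' {(0:ℂ)}ᶜ) with hUdef
  have hUopen : IsOpen U := by
    refine ContinuousOn.isOpen_inter_preimage ?_ hΩ isOpen_compl_singleton
    exact (h0.continuousOn.add (continuousOn_const.mul h1.continuousOn))
  have hz₀U : z₀ ∈ U := ⟨hz₀, by simpa using hc⟩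
  have hfa : AnalyticOnNhd ℂ v₀ U := (h0.analyticOnNhd hΩ).mono Set.inter_subset_left
  have hga : AnalyticOnNhd ℂ v₁ U := (h1.analyticOnNhd hΩ).mono Set.inter_subset_left
  have hFa : AnalyticOnNhd ℂ F U := hfa.add (analyticOnNhd_const.mul hga)
  have hFne : ∀ z ∈ U, F z ≠ 0 := fun z hz => by simpa using hz.2
  set t : ℂ → ℂ := fun z => v₁ z / F z with htdef
  set h : ℂ → ℂ := fun z => F z ^ n with hhdef
  have hta : AnalyticOnNhd ℂ t U := hga.div hFa hFne
  have hha : AnalyticOnNhd ℂ h U := hFa.pow n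
  have ht' : ∀ z ∈ U, deriv t z = (F z ^ 2)⁻¹ := by
    intro z hz
    have hFz := hFne z hz
    have hdf : HasDerivAt v₀ (deriv v₀ z) z :=
      ((hfa z hz).differentiableAt).hasDerivAt
    have hdg : HasDerivAt v₁ (deriv v₁ z) z :=
      ((hga z hz).differentiableAt).hasDerivAt
    have hdF : HasDerivAt F (deriv v₀ z + c * deriv v₁ z) z := hdf.add (hdg.const_mul c)
    have hdt : HasDerivAt t ((deriv v₁ z * F z - v₁ z * (deriv v₀ z + c * deriv v₁ z)) / F z ^ 2)
        z := hdg.div hdF hFz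
    have hnum : deriv v₁ z * F z - v₁ z * (deriv v₀ z + c * deriv v₁ z) = 1 := by
      have hw1 := hw z hz.1
      simp only [hFdef]
      linear_combination hw1
    rw [hdt.deriv, hnum, one_div]
  set cc : ℕ → ℂ := fun k =>
    ((Real.sqrt ((Nat.factorial k * Nat.factorial (n - k) : ℕ)) : ℂ))⁻¹ with hccdef
  set q : ℕ → Polynomial ℂ := fun k =>
    cc k • ((Polynomial.C (-c) * Polynomial.X + 1) ^ (n - k) * Polynomial.X ^ k : Polynomial ℂ) with hqdef
  have hfun : ∀ k : Fin (n+1), ∀ z ∈ U,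
      cc (k:ℕ) * (v₀ z ^ (n - (k:ℕ)) * v₁ z ^ (k:ℕ)) = h z * (q (k:ℕ)).eval (t z) := by
    intro k z hz
    have hFz := hFne z hz
    have heval : (q (k:ℕ)).eval (t z)
        = cc (k:ℕ) * ((-c * t z + 1) ^ (n - (k:ℕ)) * t z ^ (k:ℕ)) := by
      simp [hqdef, smul_eq_mul]
    rw [heval]
    have h1 : -c * t z + 1 = v₀ z / F z := by
      simp only [htdef, hFdef]
      have hFz' : v₀ z + c * v₁ z ≠ 0 := hFz
      field_simp
      ring
    rw [h1]
    simp only [htdef]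
    rw [div_pow, div_pow, div_mul_div_comm, ← pow_add, Nat.sub_add_cancel k.is_le]
    simp only [hhdef]
    field_simp
  have hdet1 : (Matrix.of fun i j : Fin (n + 1) => iteratedDeriv (j : ℕ)
        (fun w =>
          ((Real.sqrt ((Nat.factorial ((i:Fin (n+1)) : ℕ) * Nat.factorial (n - ((i:Fin (n+1)) : ℕ)) : ℕ)) : ℂ))⁻¹ *
            (v₀ w ^ (n - ((i:Fin (n+1)) : ℕ)) * v₁ w ^ ((i:Fin (n+1)) : ℕ))) z₀)
      = Matrix.of fun i j : Fin (n+1) =>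
          iteratedDeriv (j:ℕ) (fun w => h w * (q ((i:Fin (n+1)):ℕ)).eval (t w)) z₀ := by
    ext i j
    refine iteratedDeriv_congr_nhds ?_ _
    filter_upwards [hUopen.mem_nhds hz₀U] with w hwU using hfun i w hwU
  show Matrix.det (Matrix.of fun i j : Fin (n + 1) => iteratedDeriv (j : ℕ)
        (fun w =>
          ((Real.sqrt ((Nat.factorial ((i:Fin (n+1)) : ℕ) * Nat.factorial (n - ((i:Fin (n+1)) : ℕ)) : ℕ)) : ℂ))⁻¹ *
            (v₀ w ^ (n - ((i:Fin (n+1)) : ℕ)) * v₁ w ^ ((i:Fin (n+1)) : ℕ))) z₀) = 1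
  rw [hdet1, det_iteratedDeriv n hUopen hta hha q hz₀U]
  simp only [hqdef]
  rw [det_evalMat n c (t z₀) cc]
  have e2 : ∏ j : Fin (n+1), ((deriv t z₀) ^ (j:ℕ) * h z₀) = 1 := by
    have hF₀ : F z₀ ≠ 0 := hFne z₀ hz₀U
    have hstep : ∏ j : Fin (n+1), ((deriv t z₀) ^ (j:ℕ) * h z₀)
        = ((F z₀ ^ 2)⁻¹) ^ (∑ j : Fin (n+1), (j:ℕ)) * (F z₀ ^ n) ^ (n+1) := by
      rw [ht' z₀ hz₀U, Finset.prod_mul_distrib, Finset.prod_pow_eq_pow_sum,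
        Finset.prod_const, Finset.card_univ, Fintype.card_fin]
      try simp only [hhdef]
    have hS : (∑ j : Fin (n+1), (j:ℕ)) * 2 = n * (n+1) := by
      have h2 := Finset.sum_range_id_mul_two (n+1)
      simp only [Nat.add_sub_cancel] at h2
      rw [Fin.sum_univ_eq_sum_range (fun j => j) (n+1), h2, Nat.mul_comm]
    rw [hstep, inv_pow, ← pow_mul, ← pow_mul]
    rw [show 2 * (∑ j : Fin (n+1), (j:ℕ)) = n * (n+1) from by omega]
    exact inv_mul_cancel₀ (pow_ne_zero _ hF₀)
  have e1 : ∏ k : Fin (n+1), (cc (k:ℕ) * (((k:ℕ).factorial : ℕ) : ℂ)) = 1 := by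
    rw [Fin.prod_univ_eq_prod_range (fun k => cc k * ((k.factorial : ℕ) : ℂ)) (n+1)]
    rw [Finset.prod_mul_distrib]
    have hne : (∏ k ∈ range (n+1), ((k.factorial : ℕ) : ℂ)) ≠ 0 := by
      rw [Finset.prod_ne_zero_iff]
      intro k _
      exact_mod_cast (Nat.factorial_ne_zero k)
    have hprodcc : ∏ k ∈ range (n+1), cc k
        = (∏ k ∈ range (n+1), ((k.factorial : ℕ) : ℂ))⁻¹ := by
      simp only [hccdef]
      rw [Finset.prod_inv_distrib]
      congr 1
      rw [← Complex.ofReal_prod, prod_sqrt_fact n, Complex.ofReal_prod]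
      norm_cast
    rw [hprodcc]
    exact inv_mul_cancel₀ hne
  rw [e1, e2, mul_one]
end

section
/- Let v₀, v₁ : Ω → ℂ be holomorphic with v₀ v₁' − v₁ v₀' ≡ 1. Then the Wronskian determinant of the n+1 monomials (v₀ⁿ, v₀^{n−1}v₁, …, v₁ⁿ) is identically equal to the constant ∏_{k=1}^{n} k! on Ω. -/
open Finset

private lemma analyticOnNhd_iteratedDeriv {f : ℂ → ℂ} {V : Set ℂ}
    (hf : AnalyticOnNhd ℂ f V) (j : ℕ) : AnalyticOnNhd ℂ (iteratedDeriv j f) V := by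
  induction j with
  | zero => simpa [iteratedDeriv_zero] using hf
  | succ j ih => rw [iteratedDeriv_succ]; exact ih.deriv

private lemma iteratedDeriv_sum_const_mul {ι : Type*} (s : Finset ι) (c : ι → ℂ)
    (g : ι → ℂ → ℂ) {V : Set ℂ} (hV : IsOpen V)
    (hg : ∀ i ∈ s, AnalyticOnNhd ℂ (g i) V) (j : ℕ) :
    Set.EqOn (iteratedDeriv j (fun w => ∑ i ∈ s, c i * g i w))
      (fun w => ∑ i ∈ s, c i * iteratedDeriv j (g i) w) V := by
  induction j with
  | zero => intro z _; simp
  | succ j ih =>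
    intro z hz
    rw [iteratedDeriv_succ, (ih.eventuallyEq_of_mem (hV.mem_nhds hz)).deriv_eq,
      deriv_fun_sum fun i hi =>
        ((analyticOnNhd_iteratedDeriv (hg i hi) j z hz).differentiableAt.const_mul (c i))]
    refine Finset.sum_congr rfl fun i hi => ?_
    rw [deriv_const_mul _ (analyticOnNhd_iteratedDeriv (hg i hi) j z hz).differentiableAt,
      iteratedDeriv_succ]

noncomputable def wcoef (f u : ℂ → ℂ) : ℕ → ℕ → ℂ → ℂ
  | 0, 0 => f
  | 0, _ + 1 => fun _ => 0
  | j + 1, 0 => deriv (wcoef f u j 0)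
  | j + 1, m + 1 => fun z => deriv (wcoef f u j (m + 1)) z + wcoef f u j m z * deriv u z

lemma wcoef_eq_zero (f u : ℂ → ℂ) : ∀ j m : ℕ, j < m → wcoef f u j m = fun _ => (0 : ℂ) := by
  intro j
  induction j with
  | zero =>
    intro m hm
    match m, hm with
    | m + 1, _ => rfl
  | succ j ih =>
    intro m hm
    match m, hm with
    | m + 1, hm =>
      show (fun z => deriv (wcoef f u j (m + 1)) z + wcoef f u j m z * deriv u z) = _
      rw [ih (m + 1) (by omega), ih m (by omega)]
      funext z; simp

lemma wcoef_diag (f u : ℂ → ℂ) (j : ℕ) (z : ℂ) :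
    wcoef f u j j z = f z * (deriv u z) ^ j := by
  induction j with
  | zero => simp [wcoef]
  | succ j ih =>
    show deriv (wcoef f u j (j + 1)) z + wcoef f u j j z * deriv u z = _
    rw [wcoef_eq_zero f u j (j + 1) (by omega), ih]
    simp; ring

lemma wcoef_analytic {f u : ℂ → ℂ} {V : Set ℂ}
    (hf : AnalyticOnNhd ℂ f V) (hu : AnalyticOnNhd ℂ u V) :
    ∀ j m : ℕ, AnalyticOnNhd ℂ (wcoef f u j m) V := by
  intro j
  induction j with
  | zero =>
    intro m
    match m with
    | 0 => exact hf
    | m + 1 => exact analyticOnNhd_const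
  | succ j ih =>
    intro m
    match m with
    | 0 => exact (ih 0).deriv
    | m + 1 => exact ((ih (m + 1)).deriv).add ((ih m).mul hu.deriv)

lemma wcoef_spec {f u : ℂ → ℂ} {V : Set ℂ} (hV : IsOpen V)
    (hf : AnalyticOnNhd ℂ f V) (hu : AnalyticOnNhd ℂ u V) (k : ℕ) :
    ∀ j : ℕ, ∀ z ∈ V, iteratedDeriv j (fun w => f w * u w ^ k) z
      = ∑ m ∈ Finset.range (j + 1),
          wcoef f u j m z * (k.descFactorial m : ℂ) * u z ^ (k - m) := by
  intro j
  induction j with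
  | zero =>
    intro z _
    have h00 : wcoef f u 0 0 = f := rfl
    simp [iteratedDeriv_zero, h00]
  | succ j ih =>
    intro z hz
    rw [iteratedDeriv_succ,
      (Filter.eventuallyEq_of_mem (hV.mem_nhds hz) fun w hw => ih w hw).deriv_eq]
    have hda : ∀ m : ℕ, DifferentiableAt ℂ (wcoef f u j m) z :=
      fun m => (wcoef_analytic hf hu j m z hz).differentiableAt
    have hdu : DifferentiableAt ℂ u z := (hu z hz).differentiableAt
    rw [deriv_fun_sum fun m _ =>
      ((hda m).mul_const ((k.descFactorial m : ℂ))).fun_mul (hdu.fun_pow (k - m))]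
    have hterm : ∀ m : ℕ,
        deriv (fun w => wcoef f u j m w * (k.descFactorial m : ℂ) * u w ^ (k - m)) z
          = deriv (wcoef f u j m) z * (k.descFactorial m : ℂ) * u z ^ (k - m)
            + wcoef f u j m z * (k.descFactorial (m + 1) : ℂ) * u z ^ (k - (m + 1))
              * deriv u z := by
      intro m
      rw [deriv_fun_mul ((hda m).mul_const _) (hdu.fun_pow _), deriv_mul_const (hda m),
        deriv_fun_pow hdu _]
      have hcast : ((k.descFactorial (m + 1) : ℕ) : ℂ)
          = ((k - m : ℕ) : ℂ) * (k.descFactorial m : ℂ) := by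
        rw [Nat.descFactorial_succ]; push_cast; ring
      rw [hcast]
      have hexp : k - m - 1 = k - (m + 1) := by omega
      rw [hexp]
      ring
    calc
      ∑ m ∈ range (j + 1),
          deriv (fun w => wcoef f u j m w * (k.descFactorial m : ℂ) * u w ^ (k - m)) z
        = (∑ m ∈ range (j + 1),
            deriv (wcoef f u j m) z * (k.descFactorial m : ℂ) * u z ^ (k - m))
          + ∑ m ∈ range (j + 1),
              wcoef f u j m z * (k.descFactorial (m + 1) : ℂ) * u z ^ (k - (m + 1))
                * deriv u z := by
          rw [← Finset.sum_add_distrib]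
          exact Finset.sum_congr rfl fun m _ => hterm m
      _ = (∑ m ∈ range (j + 2),
            deriv (wcoef f u j m) z * (k.descFactorial m : ℂ) * u z ^ (k - m))
          + ∑ m ∈ range (j + 1),
              wcoef f u j m z * (k.descFactorial (m + 1) : ℂ) * u z ^ (k - (m + 1))
                * deriv u z := by
          congr 1
          rw [Finset.sum_range_succ (n := j + 1)]
          rw [wcoef_eq_zero f u j (j + 1) (by omega)]
          simp
      _ = ∑ m ∈ range (j + 2),
            wcoef f u (j + 1) m z * (k.descFactorial m : ℂ) * u z ^ (k - m) := by
          rw [Finset.sum_range_succ' (fun m =>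
            deriv (wcoef f u j m) z * (k.descFactorial m : ℂ) * u z ^ (k - m)) (j + 1)]
          rw [Finset.sum_range_succ' (fun m =>
            wcoef f u (j + 1) m z * (k.descFactorial m : ℂ) * u z ^ (k - m)) (j + 1)]
          have h0 : wcoef f u (j + 1) 0 z = deriv (wcoef f u j 0) z := rfl
          rw [h0, add_right_comm]
          congr 1
          rw [← Finset.sum_add_distrib]
          refine Finset.sum_congr rfl fun m _ => ?_
          have hsucc : wcoef f u (j + 1) (m + 1) z
              = deriv (wcoef f u j (m + 1)) z + wcoef f u j m z * deriv u z := rfl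
          rw [hsucc]
          ring

lemma wronskian_f_pow {n : ℕ} {f u : ℂ → ℂ} {V : Set ℂ} (hV : IsOpen V)
    (hf : AnalyticOnNhd ℂ f V) (hu : AnalyticOnNhd ℂ u V) {z : ℂ} (hz : z ∈ V) :
    wronskian n (fun k w => f w * u w ^ (k : ℕ)) z
      = (∏ k ∈ Finset.range (n + 1), (Nat.factorial k : ℂ))
        * (f z ^ (n + 1) * deriv u z ^ (∑ j ∈ Finset.range (n + 1), j)) := by
  classical
  set P : Matrix (Fin (n + 1)) (Fin (n + 1)) ℂ :=
    Matrix.of fun i m : Fin (n + 1) =>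
      (((i : ℕ).descFactorial (m : ℕ) : ℕ) : ℂ) * u z ^ ((i : ℕ) - (m : ℕ)) with hP
  set B : Matrix (Fin (n + 1)) (Fin (n + 1)) ℂ :=
    Matrix.of fun j m : Fin (n + 1) => wcoef f u (j : ℕ) (m : ℕ) z with hB
  have hM : (Matrix.of fun i j : Fin (n + 1) =>
      iteratedDeriv (j : ℕ) (fun w => f w * u w ^ (i : ℕ)) z) = P * B.transpose := by
    ext i j
    rw [Matrix.mul_apply]
    simp only [Matrix.of_apply, Matrix.transpose_apply]
    rw [wcoef_spec hV hf hu (i : ℕ) (j : ℕ) z hz]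
    have hsub : Finset.range ((j : ℕ) + 1) ⊆ Finset.range (n + 1) :=
      Finset.range_subset_range.2 (by omega)
    have hzero : ∀ m ∈ Finset.range (n + 1), m ∉ Finset.range ((j : ℕ) + 1) →
        wcoef f u (j : ℕ) m z * (((i : ℕ).descFactorial m : ℕ) : ℂ) * u z ^ ((i : ℕ) - m)
          = 0 := by
      intro m _ hnm
      have hjm : (j : ℕ) < m := by
        simp only [Finset.mem_range, not_lt] at hnm
        omega
      rw [wcoef_eq_zero f u _ _ hjm]
      simp
    rw [Finset.sum_subset hsub hzero,
      ← Fin.sum_univ_eq_sum_range (fun m =>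
        wcoef f u (j : ℕ) m z * (((i : ℕ).descFactorial m : ℕ) : ℂ) * u z ^ ((i : ℕ) - m))]
    exact Finset.sum_congr rfl fun m _ => by simp [hP, hB]; ring
  unfold wronskian
  rw [hM, Matrix.det_mul, Matrix.det_transpose]
  have hPdet : P.det = ∏ k ∈ Finset.range (n + 1), (Nat.factorial k : ℂ) := by
    rw [Matrix.det_of_lowerTriangular P (fun i j hij => by
      have : (i : ℕ) < (j : ℕ) := hij
      simp only [hP, Matrix.of_apply]
      rw [Nat.descFactorial_eq_zero_iff_lt.2 this]
      simp)]
    rw [← Fin.prod_univ_eq_prod_range (fun k => (Nat.factorial k : ℂ))]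
    exact Finset.prod_congr rfl fun i _ => by
      simp [hP, Nat.descFactorial_self]
  have hBdet : B.det = f z ^ (n + 1) * deriv u z ^ (∑ j ∈ Finset.range (n + 1), j) := by
    rw [Matrix.det_of_lowerTriangular B (fun i j hij => by
      have : (i : ℕ) < (j : ℕ) := hij
      simp only [hB, Matrix.of_apply]
      rw [wcoef_eq_zero f u _ _ this])]
    have : ∀ i : Fin (n + 1), B i i = f z * deriv u z ^ (i : ℕ) := fun i =>
      wcoef_diag f u (i : ℕ) z
    have hsum : (∑ i : Fin (n + 1), (i : ℕ)) = ∑ j ∈ Finset.range (n + 1), j :=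
      Fin.sum_univ_eq_sum_range (fun i => i) (n + 1)
    rw [Finset.prod_congr rfl fun i _ => this i, Finset.prod_mul_distrib,
      Finset.prod_const, Finset.prod_pow_eq_pow_sum, Finset.card_univ, Fintype.card_fin,
      hsum]
  rw [hPdet, hBdet]

lemma prod_factorial_range_eq_Icc (n : ℕ) :
    ∏ k ∈ Finset.range (n + 1), (Nat.factorial k : ℂ)
      = ∏ k ∈ Finset.Icc 1 n, (Nat.factorial k : ℂ) := by
  induction n with
  | zero => simp
  | succ m ih =>
    rw [Finset.prod_range_succ, ih, ← Finset.prod_Icc_succ_top (by omega : 1 ≤ m + 1)]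

/-- If `v₀ v₁' − v₁ v₀' ≡ 1`, then the Wronskian of the monomials
`(v₀ⁿ, v₀^{n−1} v₁, …, v₁ⁿ)` equals `∏_{k=1}^n k!` identically. -/
theorem wronskian_monomials (n : ℕ) (Ω : Set ℂ) (hΩ : IsOpen Ω)
    (v₀ v₁ : ℂ → ℂ) (h0 : DifferentiableOn ℂ v₀ Ω) (h1 : DifferentiableOn ℂ v₁ Ω)
    (hw : ∀ z ∈ Ω, v₀ z * deriv v₁ z - v₁ z * deriv v₀ z = 1) :
    ∀ z ∈ Ω,
      wronskian n (fun k w => v₀ w ^ (n - (k : ℕ)) * v₁ w ^ (k : ℕ)) z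
        = ∏ k ∈ Finset.Icc 1 n, (Nat.factorial k : ℂ) := by
  intro z₀ hz₀
  classical
  have ha0 : AnalyticOnNhd ℂ v₀ Ω := h0.analyticOnNhd hΩ
  have ha1 : AnalyticOnNhd ℂ v₁ Ω := h1.analyticOnNhd hΩ
  obtain ⟨lam, hlam⟩ : ∃ lam : ℂ, v₀ z₀ + lam * v₁ z₀ ≠ 0 := by
    by_cases h : v₀ z₀ = 0
    · refine ⟨1, fun hc => ?_⟩
      have h1w := hw z₀ hz₀
      rw [h] at h1w hc
      rw [zero_add, one_mul] at hc
      rw [hc] at h1w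
      simp at h1w
    · exact ⟨0, by simpa using h⟩
  set w₀ : ℂ → ℂ := fun z => v₀ z + lam * v₁ z with hw₀def
  have haw : AnalyticOnNhd ℂ w₀ Ω := ha0.add (analyticOnNhd_const.mul ha1)
  have hVopen : IsOpen (Ω ∩ w₀ ⁻¹' {0}ᶜ) :=
    haw.continuousOn.isOpen_inter_preimage hΩ isOpen_compl_singleton
  set V := Ω ∩ w₀ ⁻¹' {0}ᶜ with hVdef
  have hzV : z₀ ∈ V := ⟨hz₀, hlam⟩
  have hwne : ∀ z ∈ V, w₀ z ≠ 0 := fun z hz => by simpa using hz.2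
  -- the three families
  set T : Matrix (Fin (n + 1)) (Fin (n + 1)) ℂ := Matrix.of fun k i =>
    if (k : ℕ) ≤ (i : ℕ) then
      (((n - (k : ℕ)).choose ((i : ℕ) - (k : ℕ)) : ℕ) : ℂ) * lam ^ ((i : ℕ) - (k : ℕ))
    else 0 with hT
  -- binomial expansion: h-family in terms of g-family
  have hcomb : ∀ k : Fin (n + 1),
      (fun w => w₀ w ^ (n - (k : ℕ)) * v₁ w ^ (k : ℕ))
        = fun w => ∑ i : Fin (n + 1), T k i * (v₀ w ^ (n - (i : ℕ)) * v₁ w ^ (i : ℕ)) := by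
    intro k
    funext w
    have hk : (k : ℕ) ≤ n := by omega
    set F : ℕ → ℂ := fun i =>
      (if (k : ℕ) ≤ i then
        (((n - (k : ℕ)).choose (i - (k : ℕ)) : ℕ) : ℂ) * lam ^ (i - (k : ℕ)) else 0)
        * (v₀ w ^ (n - i) * v₁ w ^ i) with hF
    have s1 : ∑ i : Fin (n + 1), T k i * (v₀ w ^ (n - (i : ℕ)) * v₁ w ^ (i : ℕ))
        = ∑ i ∈ Finset.range (n + 1), F i := by
      rw [← Fin.sum_univ_eq_sum_range F (n + 1)]
      exact Finset.sum_congr rfl fun i _ => rfl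
    have s2 : ∑ i ∈ Finset.range (n + 1), F i
        = ∑ i ∈ Finset.Ico (k : ℕ) (n + 1), F i := by
      refine (Finset.sum_subset (fun i hi => ?_) (fun i _ hni => ?_)).symm
      · simp only [Finset.mem_Ico, Finset.mem_range] at *
        omega
      · have : i < (k : ℕ) := by
          simp only [Finset.mem_Ico, Finset.mem_range, not_and, not_lt] at *
          omega
        rw [hF]
        simp only [if_neg (by omega : ¬ (k : ℕ) ≤ i), zero_mul]
    have s3 : ∑ i ∈ Finset.Ico (k : ℕ) (n + 1), F i
        = ∑ j ∈ Finset.range (n + 1 - (k : ℕ)), F ((k : ℕ) + j) :=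
      Finset.sum_Ico_eq_sum_range F (k : ℕ) (n + 1)
    have hrange : n + 1 - (k : ℕ) = (n - (k : ℕ)) + 1 := by omega
    have lhsexp : w₀ w ^ (n - (k : ℕ)) * v₁ w ^ (k : ℕ)
        = ∑ j ∈ Finset.range ((n - (k : ℕ)) + 1),
            (lam * v₁ w) ^ j * v₀ w ^ (n - (k : ℕ) - j)
              * (((n - (k : ℕ)).choose j : ℕ) : ℂ) * v₁ w ^ (k : ℕ) := by
      have : w₀ w = lam * v₁ w + v₀ w := by rw [hw₀def]; ring
      rw [this, add_pow, Finset.sum_mul]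
    rw [s1, s2, s3, hrange, lhsexp]
    refine Finset.sum_congr rfl fun j hj => ?_
    have hjle : j ≤ n - (k : ℕ) := by
      simp only [Finset.mem_range] at hj; omega
    have e1 : (k : ℕ) + j - (k : ℕ) = j := by omega
    have e2 : n - ((k : ℕ) + j) = n - (k : ℕ) - j := by omega
    have e3 : v₁ w ^ ((k : ℕ) + j) = v₁ w ^ (k : ℕ) * v₁ w ^ j := by rw [← pow_add]
    rw [hF]
    simp only [if_pos (by omega : (k : ℕ) ≤ (k : ℕ) + j), e1, e2, e3, mul_pow]
    ring
  -- T is upper triangular with unit diagonal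
  have hTdet : T.det = 1 := by
    rw [Matrix.det_of_upperTriangular (M := T) (fun i j hij => by
      have hji : (j : ℕ) < (i : ℕ) := hij
      rw [hT]
      simp only [Matrix.of_apply]
      rw [if_neg (by omega)])]
    refine Finset.prod_eq_one fun i _ => ?_
    rw [hT]
    simp
  -- step A : wronskian of h-family equals wronskian of g-family at z₀
  have hganal : ∀ i : Fin (n + 1),
      AnalyticOnNhd ℂ (fun w => v₀ w ^ (n - (i : ℕ)) * v₁ w ^ (i : ℕ)) Ω :=
    fun i => (ha0.pow _).mul (ha1.pow _)
  have stepA : wronskian n (fun k w => w₀ w ^ (n - (k : ℕ)) * v₁ w ^ (k : ℕ)) z₀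
      = wronskian n (fun k w => v₀ w ^ (n - (k : ℕ)) * v₁ w ^ (k : ℕ)) z₀ := by
    unfold wronskian
    have hMeq : (Matrix.of fun k j : Fin (n + 1) =>
        iteratedDeriv (j : ℕ) (fun w => w₀ w ^ (n - (k : ℕ)) * v₁ w ^ (k : ℕ)) z₀)
        = T * (Matrix.of fun i j : Fin (n + 1) =>
            iteratedDeriv (j : ℕ) (fun w => v₀ w ^ (n - (i : ℕ)) * v₁ w ^ (i : ℕ)) z₀) := by
      ext k j
      rw [Matrix.mul_apply]
      simp only [Matrix.of_apply]
      rw [hcomb k]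
      exact iteratedDeriv_sum_const_mul Finset.univ (fun i => T k i)
        (fun i w => v₀ w ^ (n - (i : ℕ)) * v₁ w ^ (i : ℕ)) hΩ
        (fun i _ => hganal i) (j : ℕ) hz₀
    rw [hMeq, Matrix.det_mul, hTdet, one_mul]
  -- step B : on V, h-family equals f * u^k
  have stepB : wronskian n (fun k w => w₀ w ^ (n - (k : ℕ)) * v₁ w ^ (k : ℕ)) z₀
      = wronskian n (fun k w => (w₀ w ^ n) * (v₁ w / w₀ w) ^ (k : ℕ)) z₀ := by
    unfold wronskian
    congr 1
    ext k j
    simp only [Matrix.of_apply]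
    refine Set.EqOn.iteratedDeriv_of_isOpen (fun z hz => ?_) hVopen (j : ℕ) hzV
    have hne := hwne z hz
    have hk : (k : ℕ) ≤ n := by omega
    show w₀ z ^ (n - (k : ℕ)) * v₁ z ^ (k : ℕ) = w₀ z ^ n * (v₁ z / w₀ z) ^ (k : ℕ)
    rw [div_pow, show w₀ z ^ n = w₀ z ^ (n - (k : ℕ)) * w₀ z ^ (k : ℕ) by
      rw [← pow_add]; congr 1; omega]
    rw [mul_assoc, mul_div_assoc', mul_comm (w₀ z ^ (k : ℕ)), mul_div_assoc,
      div_self (pow_ne_zero _ hne), mul_one]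
  -- step C : core lemma
  have hfanal : AnalyticOnNhd ℂ (fun z => w₀ z ^ n) V :=
    (haw.mono Set.inter_subset_left).pow n
  have huanal : AnalyticOnNhd ℂ (fun z => v₁ z / w₀ z) V :=
    (ha1.mono Set.inter_subset_left).div (haw.mono Set.inter_subset_left) hwne
  have stepC := wronskian_f_pow (n := n) hVopen hfanal huanal hzV
  -- step D : the derivative of u at z₀
  have hd0 : DifferentiableAt ℂ v₀ z₀ := h0.differentiableAt (hΩ.mem_nhds hz₀)
  have hd1 : DifferentiableAt ℂ v₁ z₀ := h1.differentiableAt (hΩ.mem_nhds hz₀)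
  have hdw : DifferentiableAt ℂ w₀ z₀ := hd0.add ((differentiableAt_const lam).mul hd1)
  have hderivw : deriv w₀ z₀ = deriv v₀ z₀ + lam * deriv v₁ z₀ := by
    rw [hw₀def, deriv_fun_add hd0 (hd1.const_mul lam),
      deriv_const_mul lam hd1]
  have hu' : deriv (fun z => v₁ z / w₀ z) z₀ = (w₀ z₀ ^ 2)⁻¹ := by
    rw [deriv_fun_div hd1 hdw hlam, hderivw]
    have hnum : deriv v₁ z₀ * w₀ z₀ - v₁ z₀ * (deriv v₀ z₀ + lam * deriv v₁ z₀) = 1 := by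
      have := hw z₀ hz₀
      rw [hw₀def]
      ring_nf
      linear_combination this
    rw [hnum, one_div]
  -- step E : final arithmetic
  rw [← stepA, stepB, stepC, hu']
  have hS2 : (∑ j ∈ Finset.range (n + 1), j) * 2 = (n + 1) * n := by
    simpa using Finset.sum_range_id_mul_two (n + 1)
  have hpow : (w₀ z₀ ^ n) ^ (n + 1) * ((w₀ z₀ ^ 2)⁻¹) ^ (∑ j ∈ Finset.range (n + 1), j)
      = 1 := by
    have h2 : 2 * (∑ j ∈ Finset.range (n + 1), j) = n * (n + 1) := by
      rw [mul_comm 2, hS2, Nat.mul_comm]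
    rw [← pow_mul, inv_pow, ← pow_mul, h2]
    exact mul_inv_cancel₀ (pow_ne_zero _ (hwne z₀ hzV))
  rw [hpow, mul_one]
  exact prod_factorial_range_eq_Icc n
end

section
/- Let v₀, v₁ : Ω → ℂ be holomorphic with v₀ v₁' − v₁ v₀' ≡ 1 on the open connected set Ω. Then for any n ≥ 1, the n+1 functions v₀ⁿ, v₀^{n−1}v₁, …, v₁ⁿ are linearly independent over ℂ. -/
open Polynomial Metric

lemma key_ball (n : ℕ) (z₀ : ℂ) (r : ℝ) (hr : 0 < r)
    (w₀ w₁ : ℂ → ℂ)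
    (h0 : DifferentiableOn ℂ w₀ (ball z₀ r))
    (h1 : DifferentiableOn ℂ w₁ (ball z₀ r))
    (hnz : ∀ z ∈ ball z₀ r, w₀ z ≠ 0)
    (hw : deriv w₁ z₀ * w₀ z₀ - w₁ z₀ * deriv w₀ z₀ ≠ 0)
    (d : Fin (n + 1) → ℂ)
    (hrel : ∀ z ∈ ball z₀ r,
      ∑ k : Fin (n + 1), d k * (w₀ z ^ (n - (k : ℕ)) * w₁ z ^ (k : ℕ)) = 0) :
    ∀ k, d k = 0 := by
  have hz₀ : z₀ ∈ ball z₀ r := mem_ball_self hr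
  set B := ball z₀ r with hB
  set q : Polynomial ℂ := ∑ k : Fin (n + 1), Polynomial.monomial (k : ℕ) (d k) with hqdef
  set f : ℂ → ℂ := fun z => w₁ z / w₀ z with hf
  have hq0 : ∀ z ∈ B, q.eval (f z) = 0 := by
    intro z hz
    have hwz := hnz z hz
    have hpow : (w₀ z) ^ n ≠ 0 := pow_ne_zero _ hwz
    have : (w₀ z) ^ n * q.eval (f z) = 0 := by
      rw [hqdef, Polynomial.eval_finset_sum, Finset.mul_sum]
      rw [← hrel z hz]
      apply Finset.sum_congr rfl
      intro k _
      have hk : (k : ℕ) ≤ n := Nat.lt_succ_iff.mp k.isLt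
      simp only [Polynomial.eval_monomial, hf]
      rw [pow_sub₀ _ hwz hk]
      field_simp
      rw [div_pow, mul_assoc, div_mul_cancel₀ _ (pow_ne_zero _ hwz)]
    exact (mul_eq_zero.mp this).resolve_left hpow
  have hq : q = 0 := by
    by_contra hqne
    have hfin : Set.Finite {x | q.IsRoot x} := q.finite_setOf_isRoot hqne
    have hsub : f '' B ⊆ {x | q.IsRoot x} := by
      rintro _ ⟨z, hz, rfl⟩; exact hq0 z hz
    have hconn : IsPreconnected (f '' B) := by
      apply IsPreconnected.image (convex_ball z₀ r).isPreconnected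
      exact (h1.continuousOn.div h0.continuousOn hnz)
    have hss : (f '' B).Subsingleton := by
      by_contra hns
      rw [Set.not_subsingleton_iff] at hns
      exact (hconn.infinite_of_nontrivial hns) (hfin.subset hsub)
    -- f is constant on B, so deriv f z₀ = 0
    have hconst : ∀ z ∈ B, f z = f z₀ :=
      fun z hz => hss (Set.mem_image_of_mem f hz) (Set.mem_image_of_mem f hz₀)
    have hev : f =ᶠ[nhds z₀] fun _ => f z₀ :=
      Filter.eventuallyEq_of_mem (isOpen_ball.mem_nhds hz₀) hconst
    have hdz : deriv f z₀ = 0 := by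
      rw [hev.deriv_eq, deriv_const]
    have hd0 : DifferentiableAt ℂ w₀ z₀ := h0.differentiableAt (isOpen_ball.mem_nhds hz₀)
    have hd1 : DifferentiableAt ℂ w₁ z₀ := h1.differentiableAt (isOpen_ball.mem_nhds hz₀)
    have : deriv f z₀ = (deriv w₁ z₀ * w₀ z₀ - w₁ z₀ * deriv w₀ z₀) / (w₀ z₀) ^ 2 :=
      deriv_div hd1 hd0 (hnz z₀ hz₀)
    rw [hdz] at this
    exact hw ((div_eq_zero_iff.mp this.symm).resolve_right (pow_ne_zero 2 (hnz z₀ hz₀)))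
  intro k
  have : q.coeff (k : ℕ) = 0 := by rw [hq]; simp
  rw [hqdef] at this
  rw [Polynomial.finset_sum_coeff] at this
  simp only [Polynomial.coeff_monomial] at this
  rwa [Finset.sum_eq_single k (fun j _ hj => by simp [Fin.val_eq_val, hj])
    (fun h => absurd (Finset.mem_univ k) h), if_pos rfl] at this

/-- If `v₀ v₁' − v₁ v₀' ≡ 1` on a connected open `Ω`, the monomials `v₀^{n−k} v₁^k`
(`0 ≤ k ≤ n`) are linearly independent over `ℂ` as functions on `Ω`. -/
theorem monomials_linearIndependent (n : ℕ) (hn : 1 ≤ n) (Ω : Set ℂ) (hΩ : IsOpen Ω)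
    (hc : IsConnected Ω)
    (v₀ v₁ : ℂ → ℂ) (h0 : DifferentiableOn ℂ v₀ Ω) (h1 : DifferentiableOn ℂ v₁ Ω)
    (hw : ∀ z ∈ Ω, v₀ z * deriv v₁ z - v₁ z * deriv v₀ z = 1)
    (c : Fin (n + 1) → ℂ)
    (hrel : ∀ z ∈ Ω, ∑ k : Fin (n + 1), c k * (v₀ z ^ (n - (k : ℕ)) * v₁ z ^ (k : ℕ)) = 0) :
    ∀ k, c k = 0 := by
  obtain ⟨z₀, hz₀⟩ := hc.nonempty
  have hw0 := hw z₀ hz₀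
  have hnot : v₀ z₀ ≠ 0 ∨ v₁ z₀ ≠ 0 := by
    by_contra h
    push_neg at h
    rw [h.1, h.2] at hw0
    simp at hw0
  rcases hnot with hv | hv
  · -- v₀ z₀ ≠ 0
    have hcont : ContinuousAt v₀ z₀ := (h0.differentiableAt (hΩ.mem_nhds hz₀)).continuousAt
    obtain ⟨r, hr, hball⟩ := Metric.mem_nhds_iff.mp
      (Filter.inter_mem (hΩ.mem_nhds hz₀) (hcont.eventually_ne hv))
    have hbΩ : ball z₀ r ⊆ Ω := fun z hz => (hball hz).1
    exact key_ball n z₀ r hr v₀ v₁ (h0.mono hbΩ) (h1.mono hbΩ)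
      (fun z hz => (hball hz).2)
      (by rw [show deriv v₁ z₀ * v₀ z₀ - v₁ z₀ * deriv v₀ z₀
              = v₀ z₀ * deriv v₁ z₀ - v₁ z₀ * deriv v₀ z₀ by ring, hw0]; exact one_ne_zero)
      c (fun z hz => hrel z (hbΩ hz))
  · -- v₁ z₀ ≠ 0 : swap roles
    have hcont : ContinuousAt v₁ z₀ := (h1.differentiableAt (hΩ.mem_nhds hz₀)).continuousAt
    obtain ⟨r, hr, hball⟩ := Metric.mem_nhds_iff.mp
      (Filter.inter_mem (hΩ.mem_nhds hz₀) (hcont.eventually_ne hv))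
    have hbΩ : ball z₀ r ⊆ Ω := fun z hz => (hball hz).1
    have key := key_ball n z₀ r hr v₁ v₀ (h1.mono hbΩ) (h0.mono hbΩ)
      (fun z hz => (hball hz).2)
      (by rw [show deriv v₀ z₀ * v₁ z₀ - v₀ z₀ * deriv v₁ z₀
              = -(v₀ z₀ * deriv v₁ z₀ - v₁ z₀ * deriv v₀ z₀) by ring, hw0]
          exact neg_ne_zero.mpr one_ne_zero)
      (fun k => c k.rev)
      (by intro z hz
          rw [Fintype.sum_equiv Fin.revPerm
            (fun k : Fin (n + 1) => c k.rev * (v₁ z ^ (n - (k : ℕ)) * v₀ z ^ (k : ℕ)))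
            (fun k : Fin (n + 1) => c k * (v₀ z ^ (n - (k : ℕ)) * v₁ z ^ (k : ℕ)))
            (fun k => by
              have hk : (k : ℕ) ≤ n := Nat.lt_succ_iff.mp k.isLt
              simp only [Fin.revPerm_apply, Fin.rev_rev, Fin.val_rev,
                Nat.add_sub_cancel, Nat.succ_sub_succ]
              rw [Nat.sub_sub_self hk]
              ring)]
          exact hrel z (hbΩ hz))
    intro k
    simpa using key k.rev
end

section
/- Let v₀, v₁ : Ω → ℂ be holomorphic with v₀ v₁' − v₁ v₀' ≡ 1, and set u := −2 log(|v₀|² + |v₁|²). Then u satisfies the Liouville equation Δu + 8 e^{u} = 0 on Ω, where Δ = 4 ∂²/∂z∂\bar{z}. -/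
/-- The Wirtinger derivative `∂f/∂z = (1/2)(∂f/∂x − i ∂f/∂y)`. -/
noncomputable def wirtingerZ (f : ℂ → ℂ) (z : ℂ) : ℂ :=
  (1 / 2) * (fderiv ℝ f z 1 - Complex.I * fderiv ℝ f z Complex.I)

/-- The Wirtinger derivative `∂f/∂z̄ = (1/2)(∂f/∂x + i ∂f/∂y)`. -/
noncomputable def wirtingerZbar (f : ℂ → ℂ) (z : ℂ) : ℂ :=
  (1 / 2) * (fderiv ℝ f z 1 + Complex.I * fderiv ℝ f z Complex.I)


open Complex

/-- The real-linear map `v ↦ a v + b (conj v)`. -/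
noncomputable def mixedCLM (a b : ℂ) : ℂ →L[ℝ] ℂ :=
  a • (ContinuousLinearMap.id ℝ ℂ) + b • (conjCLE : ℂ ≃L[ℝ] ℂ).toContinuousLinearMap

@[simp] lemma mixedCLM_apply (a b v : ℂ) :
    mixedCLM a b v = a * v + b * (starRingEnd ℂ) v := by
  simp [mixedCLM, smul_eq_mul, Complex.conjCLE_apply]

lemma wirtingerZ_of_mixed {f : ℂ → ℂ} {z a b : ℂ} (h : HasFDerivAt f (mixedCLM a b) z) :
    wirtingerZ f z = a := by
  rw [wirtingerZ, h.fderiv]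
  simp only [mixedCLM_apply, map_one, Complex.conj_I, mul_one]
  have : Complex.I * Complex.I = -1 := Complex.I_mul_I
  ring_nf
  rw [Complex.I_sq]
  ring

lemma wirtingerZbar_of_mixed {f : ℂ → ℂ} {z a b : ℂ} (h : HasFDerivAt f (mixedCLM a b) z) :
    wirtingerZbar f z = b := by
  rw [wirtingerZbar, h.fderiv]
  simp only [mixedCLM_apply, map_one, Complex.conj_I, mul_one]
  ring_nf
  rw [Complex.I_sq]
  ring

lemma mixed_of_holo {f : ℂ → ℂ} {z f' : ℂ} (h : HasDerivAt f f' z) :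
    HasFDerivAt f (mixedCLM f' 0) z := by
  have := (h.hasFDerivAt).restrictScalars ℝ
  refine this.congr_fderiv ?_
  refine ContinuousLinearMap.ext fun v => ?_
  simp [smul_eq_mul, mul_comm]

lemma mixed_of_conj_holo {f : ℂ → ℂ} {z f' : ℂ} (h : HasDerivAt f f' z) :
    HasFDerivAt (fun w => (starRingEnd ℂ) (f w)) (mixedCLM 0 ((starRingEnd ℂ) f')) z := by
  have hc : HasFDerivAt (fun x : ℂ => (starRingEnd ℂ) x)
      (conjCLE : ℂ ≃L[ℝ] ℂ).toContinuousLinearMap (f z) :=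
    (conjCLE : ℂ ≃L[ℝ] ℂ).toContinuousLinearMap.hasFDerivAt
  have := hc.comp z ((h.hasFDerivAt).restrictScalars ℝ)
  refine this.congr_fderiv ?_
  refine ContinuousLinearMap.ext fun v => ?_
  simp [smul_eq_mul, mul_comm, map_mul]

lemma mixed_add {f g : ℂ → ℂ} {z a b c d : ℂ} (hf : HasFDerivAt f (mixedCLM a b) z)
    (hg : HasFDerivAt g (mixedCLM c d) z) :
    HasFDerivAt (fun w => f w + g w) (mixedCLM (a + c) (b + d)) z := by
  have := hf.add hg
  refine this.congr_fderiv ?_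
  refine ContinuousLinearMap.ext fun v => ?_
  simp only [mixedCLM_apply, ContinuousLinearMap.add_apply]
  ring

lemma mixed_mul {f g : ℂ → ℂ} {z a b c d : ℂ} (hf : HasFDerivAt f (mixedCLM a b) z)
    (hg : HasFDerivAt g (mixedCLM c d) z) :
    HasFDerivAt (fun w => f w * g w)
      (mixedCLM (a * g z + c * f z) (b * g z + d * f z)) z := by
  have := hf.mul' hg
  refine this.congr_fderiv ?_
  refine ContinuousLinearMap.ext fun v => ?_
  simp only [mixedCLM_apply, ContinuousLinearMap.add_apply, ContinuousLinearMap.smul_apply,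
    ContinuousLinearMap.smulRight_apply, smul_eq_mul, op_smul_eq_mul]
  ring

lemma mixed_const_mul {f : ℂ → ℂ} {z a b : ℂ} (k : ℂ) (hf : HasFDerivAt f (mixedCLM a b) z) :
    HasFDerivAt (fun w => k * f w) (mixedCLM (k * a) (k * b)) z := by
  have := hf.const_smul k
  refine this.congr_fderiv ?_
  refine ContinuousLinearMap.ext fun v => ?_
  simp only [mixedCLM_apply, ContinuousLinearMap.smul_apply, smul_eq_mul]
  ring

lemma mixed_inv {f : ℂ → ℂ} {z a b : ℂ} (hf : HasFDerivAt f (mixedCLM a b) z)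
    (hz : f z ≠ 0) :
    HasFDerivAt (fun w => (f w)⁻¹)
      (mixedCLM (-((f z) ^ 2)⁻¹ * a) (-((f z) ^ 2)⁻¹ * b)) z := by
  have hinv : HasDerivAt (fun x : ℂ => x⁻¹) (-((f z) ^ 2)⁻¹) (f z) := hasDerivAt_inv hz
  have := (hinv.hasFDerivAt.restrictScalars ℝ).comp z hf
  refine this.congr_fderiv ?_
  refine ContinuousLinearMap.ext fun v => ?_
  simp only [mixedCLM_apply, ContinuousLinearMap.coe_comp', Function.comp_apply,
    ContinuousLinearMap.coe_restrictScalars', ContinuousLinearMap.smulRight_apply,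
    ContinuousLinearMap.one_apply, smul_eq_mul, ContinuousLinearMap.toSpanSingleton_apply]
  ring

lemma mixed_log_comp {f : ℂ → ℂ} {z a b : ℂ} (hf : HasFDerivAt f (mixedCLM a b) z)
    (hz : f z ∈ Complex.slitPlane) :
    HasFDerivAt (fun w => Complex.log (f w))
      (mixedCLM ((f z)⁻¹ * a) ((f z)⁻¹ * b)) z := by
  have hlog := Complex.hasDerivAt_log hz
  have := (hlog.hasFDerivAt.restrictScalars ℝ).comp z hf
  refine this.congr_fderiv ?_
  refine ContinuousLinearMap.ext fun v => ?_
  simp only [mixedCLM_apply, ContinuousLinearMap.coe_comp', Function.comp_apply,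
    ContinuousLinearMap.coe_restrictScalars', ContinuousLinearMap.smulRight_apply,
    ContinuousLinearMap.one_apply, smul_eq_mul, ContinuousLinearMap.toSpanSingleton_apply]
  ring

lemma HasFDerivAt.mixed_congr {f : ℂ → ℂ} {z a b a' b' : ℂ}
    (h : HasFDerivAt f (mixedCLM a b) z) (ha : a = a') (hb : b = b') :
    HasFDerivAt f (mixedCLM a' b') z := ha ▸ hb ▸ h

/-- If `v₀ v₁' − v₁ v₀' ≡ 1` and `u = −2 log(|v₀|² + |v₁|²)`, then `u` satisfies the Liouville
equation `Δu + 8 e^u = 0`, where `Δ = 4 ∂²/∂z∂z̄`. -/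
theorem liouville_from_holomorphic (Ω : Set ℂ) (hΩ : IsOpen Ω)
    (v₀ v₁ : ℂ → ℂ) (h0 : DifferentiableOn ℂ v₀ Ω) (h1 : DifferentiableOn ℂ v₁ Ω)
    (hw : ∀ z ∈ Ω, v₀ z * deriv v₁ z - v₁ z * deriv v₀ z = 1) :
    ∀ z ∈ Ω,
      4 * wirtingerZ
            (fun w => wirtingerZbar
              (fun t =>
                ((-2 * Real.log (Complex.normSq (v₀ t) + Complex.normSq (v₁ t)) : ℝ) : ℂ)) w) z
        + 8 * Complex.exp
            ((-2 * Real.log (Complex.normSq (v₀ z) + Complex.normSq (v₁ z)) : ℝ) : ℂ) = 0 := by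
  intro z hz
  have hA0 : AnalyticOnNhd ℂ v₀ Ω := h0.analyticOnNhd hΩ
  have hA1 : AnalyticOnNhd ℂ v₁ Ω := h1.analyticOnNhd hΩ
  have hd0 : DifferentiableOn ℂ (deriv v₀) Ω := hA0.deriv.differentiableOn
  have hd1 : DifferentiableOn ℂ (deriv v₁) Ω := hA1.deriv.differentiableOn
  have hQpos : ∀ w ∈ Ω, 0 < Complex.normSq (v₀ w) + Complex.normSq (v₁ w) := by
    intro w hwΩ
    rcases (add_nonneg (Complex.normSq_nonneg _) (Complex.normSq_nonneg _)).lt_or_eq with h | h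
    · exact h
    · exfalso
      have h00 : Complex.normSq (v₀ w) = 0 ∧ Complex.normSq (v₁ w) = 0 := by
        constructor <;> nlinarith [Complex.normSq_nonneg (v₀ w), Complex.normSq_nonneg (v₁ w)]
      have e0 : v₀ w = 0 := Complex.normSq_eq_zero.1 h00.1
      have e1 : v₁ w = 0 := Complex.normSq_eq_zero.1 h00.2
      have := hw w hwΩ
      rw [e0, e1] at this
      simp at this
  have hPQ : ∀ w : ℂ, ((Complex.normSq (v₀ w) + Complex.normSq (v₁ w) : ℝ) : ℂ)
      = v₀ w * (starRingEnd ℂ) (v₀ w) + v₁ w * (starRingEnd ℂ) (v₁ w) := by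
    intro w
    push_cast
    rw [Complex.mul_conj, Complex.mul_conj]
  have hF : (fun t => ((-2 * Real.log (Complex.normSq (v₀ t) + Complex.normSq (v₁ t)) : ℝ) : ℂ))
      = fun t => -2 * Complex.log
          (v₀ t * (starRingEnd ℂ) (v₀ t) + v₁ t * (starRingEnd ℂ) (v₁ t)) := by
    funext t
    rw [← hPQ t, ← Complex.ofReal_log
      (add_nonneg (Complex.normSq_nonneg _) (Complex.normSq_nonneg _))]
    push_cast
    ring
  have hD0 : ∀ w ∈ Ω, HasDerivAt v₀ (deriv v₀ w) w := fun w hwΩ =>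
    (h0.differentiableAt (hΩ.mem_nhds hwΩ)).hasDerivAt
  have hD1 : ∀ w ∈ Ω, HasDerivAt v₁ (deriv v₁ w) w := fun w hwΩ =>
    (h1.differentiableAt (hΩ.mem_nhds hwΩ)).hasDerivAt
  have hDD0 : HasDerivAt (deriv v₀) (deriv (deriv v₀) z) z :=
    (hd0.differentiableAt (hΩ.mem_nhds hz)).hasDerivAt
  have hDD1 : HasDerivAt (deriv v₁) (deriv (deriv v₁) z) z :=
    (hd1.differentiableAt (hΩ.mem_nhds hz)).hasDerivAt
  -- derivative of P at w ∈ Ω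
  have hP : ∀ w ∈ Ω, HasFDerivAt
      (fun t => v₀ t * (starRingEnd ℂ) (v₀ t) + v₁ t * (starRingEnd ℂ) (v₁ t))
      (mixedCLM (deriv v₀ w * (starRingEnd ℂ) (v₀ w) + deriv v₁ w * (starRingEnd ℂ) (v₁ w))
        (v₀ w * (starRingEnd ℂ) (deriv v₀ w) + v₁ w * (starRingEnd ℂ) (deriv v₁ w))) w := by
    intro w hwΩ
    have t0 := mixed_mul (mixed_of_holo (hD0 w hwΩ)) (mixed_of_conj_holo (hD0 w hwΩ))
    have t1 := mixed_mul (mixed_of_holo (hD1 w hwΩ)) (mixed_of_conj_holo (hD1 w hwΩ))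
    exact (mixed_add t0 t1).mixed_congr (by ring) (by ring)
  have hslit : ∀ w ∈ Ω,
      (v₀ w * (starRingEnd ℂ) (v₀ w) + v₁ w * (starRingEnd ℂ) (v₁ w)) ∈ Complex.slitPlane := by
    intro w hwΩ
    rw [← hPQ w]
    exact Complex.ofReal_mem_slitPlane.2 (hQpos w hwΩ)
  -- inner Wirtinger derivative
  have hInner : ∀ w ∈ Ω,
      wirtingerZbar (fun t =>
          ((-2 * Real.log (Complex.normSq (v₀ t) + Complex.normSq (v₁ t)) : ℝ) : ℂ)) w
        = -2 * ((v₀ w * (starRingEnd ℂ) (deriv v₀ w) + v₁ w * (starRingEnd ℂ) (deriv v₁ w))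
            * (v₀ w * (starRingEnd ℂ) (v₀ w) + v₁ w * (starRingEnd ℂ) (v₁ w))⁻¹) := by
    intro w hwΩ
    rw [hF]
    have hlog := mixed_log_comp (hP w hwΩ) (hslit w hwΩ)
    have hFw := mixed_const_mul (-2 : ℂ) hlog
    rw [wirtingerZbar_of_mixed hFw]
    ring
  -- the outer function agrees with G on a neighbourhood of z
  have hcong : (fun w => wirtingerZbar (fun t =>
        ((-2 * Real.log (Complex.normSq (v₀ t) + Complex.normSq (v₁ t)) : ℝ) : ℂ)) w)
      =ᶠ[nhds z] (fun w =>
        -2 * ((v₀ w * (starRingEnd ℂ) (deriv v₀ w) + v₁ w * (starRingEnd ℂ) (deriv v₁ w))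
            * (v₀ w * (starRingEnd ℂ) (v₀ w) + v₁ w * (starRingEnd ℂ) (v₁ w))⁻¹)) :=
    Filter.eventuallyEq_of_mem (hΩ.mem_nhds hz) hInner
  have hwZeq : wirtingerZ (fun w => wirtingerZbar (fun t =>
        ((-2 * Real.log (Complex.normSq (v₀ t) + Complex.normSq (v₁ t)) : ℝ) : ℂ)) w) z
      = wirtingerZ (fun w =>
        -2 * ((v₀ w * (starRingEnd ℂ) (deriv v₀ w) + v₁ w * (starRingEnd ℂ) (deriv v₁ w))
            * (v₀ w * (starRingEnd ℂ) (v₀ w) + v₁ w * (starRingEnd ℂ) (v₁ w))⁻¹)) z := by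
    unfold wirtingerZ
    rw [hcong.fderiv_eq]
  have hPne : (v₀ z * (starRingEnd ℂ) (v₀ z) + v₁ z * (starRingEnd ℂ) (v₁ z)) ≠ 0 :=
    Complex.slitPlane_ne_zero (hslit z hz)
  -- derivative of N at z
  have hN : HasFDerivAt
      (fun w => v₀ w * (starRingEnd ℂ) (deriv v₀ w) + v₁ w * (starRingEnd ℂ) (deriv v₁ w))
      (mixedCLM
        (deriv v₀ z * (starRingEnd ℂ) (deriv v₀ z) + deriv v₁ z * (starRingEnd ℂ) (deriv v₁ z))
        (v₀ z * (starRingEnd ℂ) (deriv (deriv v₀) z)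
          + v₁ z * (starRingEnd ℂ) (deriv (deriv v₁) z))) z := by
    have t0 := mixed_mul (mixed_of_holo (hD0 z hz)) (mixed_of_conj_holo hDD0)
    have t1 := mixed_mul (mixed_of_holo (hD1 z hz)) (mixed_of_conj_holo hDD1)
    exact (mixed_add t0 t1).mixed_congr (by ring) (by ring)
  have hPinv := mixed_inv (hP z hz) hPne
  have hG := mixed_const_mul (-2 : ℂ) (mixed_mul hN hPinv)
  rw [hwZeq, wirtingerZ_of_mixed hG]
  -- the exponential term
  have hexp : Complex.exp ((-2 * Real.log (Complex.normSq (v₀ z) + Complex.normSq (v₁ z)) : ℝ) : ℂ)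
      = ((v₀ z * (starRingEnd ℂ) (v₀ z) + v₁ z * (starRingEnd ℂ) (v₁ z)) ^ 2)⁻¹ := by
    rw [← Complex.ofReal_exp]
    have hlogeq : -2 * Real.log (Complex.normSq (v₀ z) + Complex.normSq (v₁ z))
        = Real.log (((Complex.normSq (v₀ z) + Complex.normSq (v₁ z)) ^ 2)⁻¹) := by
      rw [Real.log_inv, Real.log_pow]
      push_cast
      ring
    rw [hlogeq, Real.exp_log (by have := hQpos z hz; positivity)]
    rw [Complex.ofReal_inv, Complex.ofReal_pow, hPQ z]
  rw [hexp]
  -- final algebra using the Wronskian identity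
  have hwz := hw z hz
  have hwc : (starRingEnd ℂ) (v₀ z) * (starRingEnd ℂ) (deriv v₁ z)
      - (starRingEnd ℂ) (v₁ z) * (starRingEnd ℂ) (deriv v₀ z) = 1 := by
    have := congrArg (starRingEnd ℂ) hwz
    simpa [map_sub, map_mul] using this
  have key : (deriv v₀ z * (starRingEnd ℂ) (deriv v₀ z)
        + deriv v₁ z * (starRingEnd ℂ) (deriv v₁ z))
      * (v₀ z * (starRingEnd ℂ) (v₀ z) + v₁ z * (starRingEnd ℂ) (v₁ z))
      - (deriv v₀ z * (starRingEnd ℂ) (v₀ z) + deriv v₁ z * (starRingEnd ℂ) (v₁ z))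
      * (v₀ z * (starRingEnd ℂ) (deriv v₀ z) + v₁ z * (starRingEnd ℂ) (deriv v₁ z)) = 1 := by
    linear_combination ((starRingEnd ℂ) (v₀ z) * (starRingEnd ℂ) (deriv v₁ z)
      - (starRingEnd ℂ) (v₁ z) * (starRingEnd ℂ) (deriv v₀ z)) * hwz + hwc
  have e2 : (v₀ z * (starRingEnd ℂ) (v₀ z) + v₁ z * (starRingEnd ℂ) (v₁ z))
      * (v₀ z * (starRingEnd ℂ) (v₀ z) + v₁ z * (starRingEnd ℂ) (v₁ z))⁻¹ = 1 :=
    mul_inv_cancel₀ hPne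
  simp only [pow_two, mul_inv] at key ⊢
  linear_combination
    ((-8 : ℂ) * ((v₀ z * (starRingEnd ℂ) (v₀ z) + v₁ z * (starRingEnd ℂ) (v₁ z))⁻¹
        * (v₀ z * (starRingEnd ℂ) (v₀ z) + v₁ z * (starRingEnd ℂ) (v₁ z))⁻¹)) * key
    + ((8 : ℂ) * (deriv v₀ z * (starRingEnd ℂ) (deriv v₀ z)
        + deriv v₁ z * (starRingEnd ℂ) (deriv v₁ z))
        * (v₀ z * (starRingEnd ℂ) (v₀ z) + v₁ z * (starRingEnd ℂ) (v₁ z))⁻¹) * e2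
end

section
/- Let v₀, v₁ : Ω → ℂ be holomorphic without common zeros, and set h := |v₀|² + |v₁|². Then ∂²/∂z∂\bar{z} (log h) = |v₀ v₁' − v₁ v₀'|² / h² on Ω. -/
open Complex

noncomputable def WDmap (a b : ℂ) : ℂ →L[ℝ] ℂ :=
  a • (ContinuousLinearMap.id ℝ ℂ) + b • (Complex.conjCLE.toContinuousLinearMap)

@[simp] lemma WDmap_apply (a b v : ℂ) : WDmap a b v = a * v + b * (starRingEnd ℂ) v := by
  simp [WDmap, Complex.conjCLE]

def HasWD (f : ℂ → ℂ) (z a b : ℂ) : Prop := HasFDerivAt f (WDmap a b) z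

lemma HasWD.wz {f : ℂ → ℂ} {z a b : ℂ} (h : HasWD f z a b) : wirtingerZ f z = a := by
  have hd := HasFDerivAt.fderiv h
  have hI : Complex.I * Complex.I = -1 := Complex.I_mul_I
  simp only [wirtingerZ, hd, WDmap_apply, map_one, Complex.conj_I]
  linear_combination ((b - a) / 2) * hI

lemma HasWD.wzbar {f : ℂ → ℂ} {z a b : ℂ} (h : HasWD f z a b) : wirtingerZbar f z = b := by
  have hd := HasFDerivAt.fderiv h
  have hI : Complex.I * Complex.I = -1 := Complex.I_mul_I
  simp only [wirtingerZbar, hd, WDmap_apply, map_one, Complex.conj_I]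
  linear_combination ((a - b) / 2) * hI

lemma HasWD.of_hasDerivAt {f : ℂ → ℂ} {z f' : ℂ} (h : HasDerivAt f f' z) :
    HasWD f z f' 0 := by
  have h2 := h.hasFDerivAt.restrictScalars ℝ
  have heq : ((ContinuousLinearMap.toSpanSingleton ℂ f').restrictScalars ℝ)
      = WDmap f' 0 := by
    ext v
    simp [mul_comm]
  rw [heq] at h2
  exact h2

lemma HasWD.conj {f : ℂ → ℂ} {z a b : ℂ} (h : HasWD f z a b) :
    HasWD (fun t => (starRingEnd ℂ) (f t)) z ((starRingEnd ℂ) b) ((starRingEnd ℂ) a) := by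
  have hc : HasFDerivAt (fun w : ℂ => (starRingEnd ℂ) w)
      (Complex.conjCLE.toContinuousLinearMap) (f z) :=
    Complex.conjCLE.toContinuousLinearMap.hasFDerivAt
  have h2 := hc.comp z h
  have heq : (Complex.conjCLE.toContinuousLinearMap).comp (WDmap a b)
      = WDmap ((starRingEnd ℂ) b) ((starRingEnd ℂ) a) := by
    ext v
    simp [Complex.conjCLE, map_add, map_mul]
    ring
  rw [heq] at h2
  exact h2

lemma HasWD.addWD {f g : ℂ → ℂ} {z a b c d : ℂ} (hf : HasWD f z a b) (hg : HasWD g z c d) :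
    HasWD (fun t => f t + g t) z (a + c) (b + d) := by
  have h2 := HasFDerivAt.add hf hg
  have heq : WDmap a b + WDmap c d = WDmap (a + c) (b + d) := by
    ext v; simp; ring
  rw [heq] at h2
  exact h2

lemma HasWD.mulWD {f g : ℂ → ℂ} {z a b c d : ℂ} (hf : HasWD f z a b) (hg : HasWD g z c d) :
    HasWD (fun t => f t * g t) z (f z * c + g z * a) (f z * d + g z * b) := by
  have h2 := HasFDerivAt.mul' hf hg
  have heq : f z • WDmap c d + MulOpposite.op (g z) • WDmap a b
      = WDmap (f z * c + g z * a) (f z * d + g z * b) := by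
    ext v; simp [smul_eq_mul]; ring
  rw [heq] at h2
  exact h2

lemma HasWD.comp_holo {f g : ℂ → ℂ} {z a b g' : ℂ} (hf : HasWD f z a b)
    (hg : HasDerivAt g g' (f z)) :
    HasWD (fun t => g (f t)) z (g' * a) (g' * b) := by
  have h2 := (hg.hasFDerivAt.restrictScalars ℝ).comp z hf
  have heq : ((ContinuousLinearMap.toSpanSingleton ℂ g').restrictScalars ℝ).comp
      (WDmap a b) = WDmap (g' * a) (g' * b) := by
    ext v; simp [smul_eq_mul]; ring
  rw [heq] at h2
  exact h2

lemma wirtingerZ_congr {f g : ℂ → ℂ} {z : ℂ} (h : f =ᶠ[nhds z] g) :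
    wirtingerZ f z = wirtingerZ g z := by
  rw [wirtingerZ, wirtingerZ, h.fderiv_eq]

lemma wirtingerZbar_congr {f g : ℂ → ℂ} {z : ℂ} (h : f =ᶠ[nhds z] g) :
    wirtingerZbar f z = wirtingerZbar g z := by
  rw [wirtingerZbar, wirtingerZbar, h.fderiv_eq]

lemma HasWD.congr_ab {f : ℂ → ℂ} {z a b a' b' : ℂ} (h : HasWD f z a b)
    (ha : a = a') (hb : b = b') : HasWD f z a' b' := ha ▸ hb ▸ h

/-- Infinitesimal Plücker formula for `n = 1`: with `h = |v₀|² + |v₁|²` and `v₀, v₁`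
holomorphic without common zeros, `∂²/∂z∂z̄ (log h) = |v₀ v₁' − v₁ v₀'|² / h²`. -/
theorem pluecker_n_one (Ω : Set ℂ) (hΩ : IsOpen Ω)
    (v₀ v₁ : ℂ → ℂ) (h0 : DifferentiableOn ℂ v₀ Ω) (h1 : DifferentiableOn ℂ v₁ Ω)
    (hnz : ∀ z ∈ Ω, ¬(v₀ z = 0 ∧ v₁ z = 0)) :
    ∀ z ∈ Ω,
      wirtingerZ
          (fun w => wirtingerZbar
            (fun t => ((Real.log (Complex.normSq (v₀ t) + Complex.normSq (v₁ t)) : ℝ) : ℂ)) w) z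
        = ((Complex.normSq (v₀ z * deriv v₁ z - v₁ z * deriv v₀ z) /
            (Complex.normSq (v₀ z) + Complex.normSq (v₁ z)) ^ 2 : ℝ) : ℂ) := by
  intro z hz
  have hmem : Ω ∈ nhds z := hΩ.mem_nhds hz
  set u : ℂ → ℝ := fun t => Complex.normSq (v₀ t) + Complex.normSq (v₁ t) with hu
  have hupos : ∀ w ∈ Ω, 0 < u w := by
    intro w hw
    rcases not_and_or.mp (hnz w hw) with h | h
    · have h' := Complex.normSq_pos.mpr h
      have := Complex.normSq_nonneg (v₁ w)
      simp only [hu]; linarith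
    · have h' := Complex.normSq_pos.mpr h
      have := Complex.normSq_nonneg (v₀ w)
      simp only [hu]; linarith
  set H : ℂ → ℂ := fun t => v₀ t * (starRingEnd ℂ) (v₀ t) + v₁ t * (starRingEnd ℂ) (v₁ t)
    with hHdef
  have hHu : ∀ w, H w = ((u w : ℝ) : ℂ) := by
    intro w
    simp only [hHdef, hu, Complex.mul_conj]
    push_cast
    ring
  have hd0 : ∀ w ∈ Ω, HasDerivAt v₀ (deriv v₀ w) w := fun w hw =>
    (h0.differentiableAt (hΩ.mem_nhds hw)).hasDerivAt
  have hd1 : ∀ w ∈ Ω, HasDerivAt v₁ (deriv v₁ w) w := fun w hw =>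
    (h1.differentiableAt (hΩ.mem_nhds hw)).hasDerivAt
  set A : ℂ → ℂ := fun w => (starRingEnd ℂ) (v₀ w) * deriv v₀ w
      + (starRingEnd ℂ) (v₁ w) * deriv v₁ w with hAdef
  have hH : ∀ w ∈ Ω, HasWD H w (A w) ((starRingEnd ℂ) (A w)) := by
    intro w hw
    refine (((HasWD.of_hasDerivAt (hd0 w hw)).mulWD
        (HasWD.of_hasDerivAt (hd0 w hw)).conj).addWD
        ((HasWD.of_hasDerivAt (hd1 w hw)).mulWD
        (HasWD.of_hasDerivAt (hd1 w hw)).conj)).congr_ab ?_ ?_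
    · simp only [hAdef, map_zero, mul_zero, zero_add]
    · simp only [hAdef, map_add, map_mul, Complex.conj_conj, mul_zero, add_zero]
  have hslit : ∀ w ∈ Ω, H w ∈ Complex.slitPlane := by
    intro w hw
    rw [hHu w, Complex.mem_slitPlane_iff]
    left
    simpa using hupos w hw
  have hHne : ∀ w ∈ Ω, H w ≠ 0 := by
    intro w hw
    rw [hHu w]
    exact_mod_cast (hupos w hw).ne'
  set F : ℂ → ℂ := fun t => ((Real.log (u t) : ℝ) : ℂ) with hFdef
  have hFeq : ∀ w ∈ Ω, F =ᶠ[nhds w] fun t => Complex.log (H t) := by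
    intro w hw
    filter_upwards [hΩ.mem_nhds hw] with t ht
    rw [hFdef]
    simp only
    rw [Complex.ofReal_log (hupos t ht).le, ← hHu t]
  have hinner : ∀ w ∈ Ω, wirtingerZbar F w = (H w)⁻¹ * ((starRingEnd ℂ) (A w)) := by
    intro w hw
    rw [wirtingerZbar_congr (hFeq w hw)]
    exact ((hH w hw).comp_holo (Complex.hasDerivAt_log (hslit w hw))).wzbar
  set Bf : ℂ → ℂ := fun w => v₀ w * (starRingEnd ℂ) (deriv v₀ w)
      + v₁ w * (starRingEnd ℂ) (deriv v₁ w) with hBdef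
  have hAB : ∀ w, (starRingEnd ℂ) (A w) = Bf w := by
    intro w
    simp only [hAdef, hBdef, map_add, map_mul, Complex.conj_conj]
  have houter : (fun w => wirtingerZbar F w) =ᶠ[nhds z] fun w => (H w)⁻¹ * Bf w := by
    filter_upwards [hmem] with w hw
    rw [hinner w hw, hAB w]
  have ha0 := (h0.analyticOnNhd hΩ).deriv
  have ha1 := (h1.analyticOnNhd hΩ).deriv
  have hdd0 : HasDerivAt (deriv v₀) (deriv (deriv v₀) z) z :=
    ((ha0 z hz).differentiableAt).hasDerivAt
  have hdd1 : HasDerivAt (deriv v₁) (deriv (deriv v₁) z) z :=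
    ((ha1 z hz).differentiableAt).hasDerivAt
  have hBf : HasWD Bf z
      (v₀ z * (starRingEnd ℂ) 0 + (starRingEnd ℂ) (deriv v₀ z) * deriv v₀ z
        + (v₁ z * (starRingEnd ℂ) 0 + (starRingEnd ℂ) (deriv v₁ z) * deriv v₁ z))
      (v₀ z * (starRingEnd ℂ) (deriv (deriv v₀) z) + (starRingEnd ℂ) (deriv v₀ z) * 0
        + (v₁ z * (starRingEnd ℂ) (deriv (deriv v₁) z) + (starRingEnd ℂ) (deriv v₁ z) * 0)) :=
    ((HasWD.of_hasDerivAt (hd0 z hz)).mulWD (HasWD.of_hasDerivAt hdd0).conj).addWD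
      ((HasWD.of_hasDerivAt (hd1 z hz)).mulWD (HasWD.of_hasDerivAt hdd1).conj)
  have hinv : HasWD (fun t => (H t)⁻¹) z (-(H z ^ 2)⁻¹ * A z)
      (-(H z ^ 2)⁻¹ * (starRingEnd ℂ) (A z)) :=
    (hH z hz).comp_holo (hasDerivAt_inv (hHne z hz))
  have hG := hinv.mulWD hBf
  rw [wirtingerZ_congr houter, hG.wz]
  have hne : H z ≠ 0 := hHne z hz
  have hrhs : ((Complex.normSq (v₀ z * deriv v₁ z - v₁ z * deriv v₀ z) /
      (Complex.normSq (v₀ z) + Complex.normSq (v₁ z)) ^ 2 : ℝ) : ℂ)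
      = (v₀ z * deriv v₁ z - v₁ z * deriv v₀ z) *
        (starRingEnd ℂ) (v₀ z * deriv v₁ z - v₁ z * deriv v₀ z) / (H z) ^ 2 := by
    rw [Complex.mul_conj, hHu z]
    simp only [hu]
    push_cast
    ring
  rw [hrhs]
  have hHz : H z = v₀ z * (starRingEnd ℂ) (v₀ z) + v₁ z * (starRingEnd ℂ) (v₁ z) := rfl
  simp only [hBdef, hAdef, hHz, map_zero, mul_zero, zero_add, add_zero, map_sub, map_add, map_mul]
  field_simp
  ring
end
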